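/- arXiv:1903.03636 — 5 statements merged into one kernel-verified Lean document; each statement's English description precedes it below -/
import Mathlib

section
/- Let X = X₁ + ⋯ + Xₙ, where n ≥ 1 and X₁, …, Xₙ are independent geometric random variables with parameters p₁, …, pₙ ∈ (0, 1], and let μ = E[X] = Σᵢ 1/pᵢ. Then for every real λ ≥ 1, P[X ≥ λμ] ≤ e^{1−λ}. -/
open MeasureTheory ProbabilityTheory Real
open scoped ENNReal NNReal

/-- `log (1+y) ≥ y/(1+y)` for `y ≥ 0`. -/
lemma log_ge_div (y : ℝ) (hy : 0 ≤ y) : y / (1 + y) ≤ Real.log (1 + y) := by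
  have h1 : (0:ℝ) < 1 + y := by linarith
  have h2 := Real.log_le_sub_one_of_pos (x := (1+y)⁻¹) (by positivity)
  rw [Real.log_inv] at h2
  have : (1+y)⁻¹ - 1 = -(y/(1+y)) := by field_simp; ring
  rw [this] at h2
  linarith

lemma key_ineq (lam n M c : ℝ) (hlam : 1 ≤ lam) (hn : 1 ≤ n) (hM : 0 < M)
    (hc : 0 ≤ c) (hcn : c ≤ n - 1) :
    ∃ x : ℝ, 0 ≤ x ∧ x ≤ 1 ∧ (0 < c → x < 1) ∧
      lam - 1 ≤ (lam * (n + M + c * M) - n) * Real.log (1 + x / M)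
        + c * Real.log (1 - x) := by
  set B : ℝ := lam * (n + M + c * M) - n with hB
  have hA : (0:ℝ) < n + M + c * M := by nlinarith [mul_nonneg hc hM.le]
  have hBM : M + c * M ≤ B := by
    nlinarith [mul_nonneg (sub_nonneg.mpr hlam) hA.le]
  have hBpos : 0 < B := by nlinarith [mul_nonneg hc hM.le]
  set s := Real.sqrt (B * M) with hs
  set g := Real.sqrt c with hg
  have hs2 : s ^ 2 = B * M := Real.sq_sqrt (by positivity)
  have hg2 : g ^ 2 = c := Real.sq_sqrt hc
  have hspos : 0 < s := Real.sqrt_pos.mpr (by positivity)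
  have hgnn : 0 ≤ g := Real.sqrt_nonneg c
  have hMgs : M * g < s := by
    by_contra hcon
    push_neg at hcon
    have h2 : s ^ 2 ≤ (M * g) ^ 2 := pow_le_pow_left₀ hspos.le hcon 2
    have h3 : (M * g) ^ 2 = M ^ 2 * c := by rw [mul_pow, hg2]
    nlinarith [mul_le_mul_of_nonneg_right hBM hM.le]
  set x : ℝ := (s - M * g) / (s + g) with hx
  have hD : 0 < s + g := by linarith
  have hx0 : 0 ≤ x := div_nonneg (by linarith) hD.le
  have hx1 : x ≤ 1 := by
    rw [hx, div_le_one hD]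
    nlinarith
  have hM1 : (0:ℝ) < M + 1 := by linarith
  refine ⟨x, hx0, hx1, ?_, ?_⟩
  · intro hcpos
    have hgpos : 0 < g := Real.sqrt_pos.mpr hcpos
    rw [hx, div_lt_one hD]
    nlinarith
  · -- main inequality
    have hMx : (0:ℝ) < M + x := by linarith
    have hMxeq : M + x = (M + 1) * s / (s + g) := by
      rw [hx]; field_simp; ring
    have hfrac1 : x / (M + x) = (s - M * g) / ((M + 1) * s) := by
      rw [hMxeq, hx, div_div_div_cancel_right₀]
      exact hD.ne'
    -- first term lower bound
    have hlog1 : x / (M + x) ≤ Real.log (1 + x / M) := by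
      have h := log_ge_div (x / M) (by positivity)
      have heq : x / M / (1 + x / M) = x / (M + x) := by
        rw [div_div]
        congr 1
        field_simp
      rwa [heq] at h
    have hterm1 : (B - s * g) / (M + 1) ≤ B * Real.log (1 + x / M) := by
      have h1 : B * (x / (M + x)) ≤ B * Real.log (1 + x / M) :=
        mul_le_mul_of_nonneg_left hlog1 hBpos.le
      have h2 : B * (x / (M + x)) = (B - s * g) / (M + 1) := by
        rw [hfrac1, mul_div_assoc',
          div_eq_div_iff (by positivity) hM1.ne']
        linear_combination ((M + 1) * g) * hs2
      linarith
    -- second term lower bound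
    have hterm2 : -((s * g - c * M) / (M + 1)) ≤ c * Real.log (1 - x) := by
      rcases eq_or_lt_of_le hc with hc0 | hcpos
      · have hg0 : g = 0 := by rw [hg, ← hc0, Real.sqrt_zero]
        rw [← hc0, hg0]
        simp
      · have hgpos : 0 < g := Real.sqrt_pos.mpr hcpos
        have hxlt1 : x < 1 := by rw [hx, div_lt_one hD]; nlinarith
        have h1x : (0:ℝ) < 1 - x := by linarith
        have hlog2 : -(x / (1 - x)) ≤ Real.log (1 - x) := by
          have h2 := Real.log_le_sub_one_of_pos (x := (1-x)⁻¹) (by positivity)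
          rw [Real.log_inv] at h2
          have : (1-x)⁻¹ - 1 = x / (1-x) := by field_simp; ring
          rw [this] at h2
          linarith
        have h3 : c * -(x / (1 - x)) ≤ c * Real.log (1 - x) :=
          mul_le_mul_of_nonneg_left hlog2 hc
        have h1xeq : 1 - x = (M + 1) * g / (s + g) := by
          rw [hx]; field_simp; ring
        have hfrac2 : x / (1 - x) = (s - M * g) / ((M + 1) * g) := by
          rw [h1xeq, hx, div_div_div_cancel_right₀]
          exact hD.ne'
        have h4 : c * (x / (1 - x)) = (s * g - c * M) / (M + 1) := by
          rw [hfrac2, mul_div_assoc',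
            div_eq_div_iff (by positivity) hM1.ne']
          linear_combination (-((M + 1) * s)) * hg2
        linarith
    -- combine
    have hn1cM : (0:ℝ) ≤ n - 1 + c * M := by
      nlinarith [mul_nonneg hc hM.le]
    have hann : 0 ≤ (lam - 1) * (n - 1 + c * M) := mul_nonneg (by linarith) hn1cM
    have hcM : 0 ≤ c * M := mul_nonneg hc hM.le
    have hKa : B + c * M - (lam - 1) * (M + 1)
        = (lam - 1) * (n - 1 + c * M) + M + 2 * (c * M) := by rw [hB]; ring
    have hKnn : 0 ≤ B + c * M - (lam - 1) * (M + 1) := by rw [hKa]; linarith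
    have hid : (B + c * M - (lam - 1) * (M + 1)) ^ 2 - 4 * (B * M * c)
        = (M - (lam - 1) * (n - 1 + c * M)) ^ 2
          + 4 * (M * ((lam - 1) * (n - 1 - c))) := by
      rw [hB]; ring
    have hsq : (2 * (s * g)) ^ 2 ≤ (B + c * M - (lam - 1) * (M + 1)) ^ 2 := by
      have h5 : (2 * (s * g)) ^ 2 = 4 * (B * M * c) := by
        have h6 : (2 * (s * g)) ^ 2 = 4 * (s ^ 2 * g ^ 2) := by ring
        rw [h6, hs2, hg2]
      have h7 : 0 ≤ 4 * (M * ((lam - 1) * (n - 1 - c))) := by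
        have h8 : (0:ℝ) ≤ (lam - 1) * (n - 1 - c) :=
          mul_nonneg (by linarith) (by linarith)
        have h9 := mul_nonneg hM.le h8
        linarith
      linarith [sq_nonneg (M - (lam - 1) * (n - 1 + c * M))]
    have h2sg : 0 ≤ 2 * (s * g) := by positivity
    have hK : 2 * (s * g) ≤ B + c * M - (lam - 1) * (M + 1) :=
      (pow_le_pow_iff_left₀ h2sg hKnn two_ne_zero).mp hsq
    have hfin : lam - 1 ≤ (B - s * g) / (M + 1) - (s * g - c * M) / (M + 1) := by
      rw [div_sub_div_same, le_div_iff₀ hM1]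
      linarith
    linarith

lemma lintegral_comp_nat' {Ω : Type*} [MeasurableSpace Ω] (μ : Measure Ω)
    (W : Ω → ℕ) (hW : Measurable W) (g : ℕ → ℝ≥0∞) :
    ∫⁻ ω, g (W ω) ∂μ = ∑' b, g b * μ (W ⁻¹' {b}) := by
  rw [← lintegral_map measurable_from_nat hW, lintegral_countable']
  congr 1
  ext b
  rw [Measure.map_apply hW (measurableSet_singleton b)]

lemma geom_mgf {Ω : Type*} [MeasurableSpace Ω] (μ : Measure Ω) [IsProbabilityMeasure μ]
    (Z : Ω → ℕ) (hZ : Measurable Z) (pp s : ℝ) (hp0 : 0 < pp) (hp1 : pp ≤ 1)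
    (hs : 1 ≤ s) (hqs : (1 - pp) * s < 1)
    (hpos : ∀ ω, 1 ≤ Z ω)
    (hg : ∀ j : ℕ, 1 ≤ j → (μ {ω | Z ω = j}).toReal = (1 - pp) ^ (j - 1) * pp) :
    Integrable (fun ω => Real.exp (Real.log s * (Z ω : ℝ))) μ ∧
      mgf (fun ω => (Z ω : ℝ)) μ (Real.log s) = pp * s / (1 - (1 - pp) * s) := by
  have hsp : (0 : ℝ) < s := by linarith
  have hq0 : (0:ℝ) ≤ 1 - pp := by linarith
  have hqs0 : (0:ℝ) ≤ (1 - pp) * s := by positivity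
  have hden : (0:ℝ) < 1 - (1 - pp) * s := by linarith
  have hpoint : ∀ ω, Real.exp (Real.log s * (Z ω : ℝ)) = s ^ Z ω := by
    intro ω
    rw [mul_comm, Real.exp_nat_mul, Real.exp_log hsp]
  have hmeaspow : Measurable (fun ω => s ^ Z ω) :=
    (measurable_from_nat (f := fun b : ℕ => s ^ b)).comp hZ
  -- pmf values
  have hpmf : ∀ j : ℕ, μ (Z ⁻¹' {j + 1}) = ENNReal.ofReal ((1 - pp) ^ j * pp) := by
    intro j
    have h1 : (μ {ω | Z ω = j + 1}).toReal = (1 - pp) ^ j * pp := by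
      simpa using hg (j + 1) (by omega)
    have h2 : μ (Z ⁻¹' {j + 1}) = μ {ω | Z ω = j + 1} := rfl
    rw [h2, ← ENNReal.ofReal_toReal (measure_ne_top μ _), h1]
  have h0 : μ (Z ⁻¹' {0}) = 0 := by
    have : Z ⁻¹' {0} = ∅ := by
      ext ω
      simp only [Set.mem_preimage, Set.mem_singleton_iff, Set.mem_empty_iff_false, iff_false]
      have := hpos ω; omega
    rw [this, measure_empty]
  have hsummable : Summable (fun b : ℕ => pp * s * ((1 - pp) * s) ^ b) :=
    (summable_geometric_of_lt_one hqs0 hqs).mul_left _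
  have hlint : ∫⁻ ω, ENNReal.ofReal (s ^ Z ω) ∂μ
      = ENNReal.ofReal (pp * s / (1 - (1 - pp) * s)) := by
    rw [lintegral_comp_nat' μ Z hZ (fun b => ENNReal.ofReal (s ^ b))]
    rw [tsum_eq_zero_add' ENNReal.summable]
    rw [h0, mul_zero, zero_add]
    have hterm : ∀ b : ℕ, ENNReal.ofReal (s ^ (b + 1)) * μ (Z ⁻¹' {b + 1})
        = ENNReal.ofReal (pp * s * ((1 - pp) * s) ^ b) := by
      intro b
      rw [hpmf b, ← ENNReal.ofReal_mul (by positivity)]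
      congr 1
      rw [mul_pow, pow_succ]
      ring
    simp_rw [hterm]
    rw [← ENNReal.ofReal_tsum_of_nonneg (fun b => by positivity) hsummable]
    congr 1
    rw [tsum_mul_left, tsum_geometric_of_lt_one hqs0 hqs]
    rw [div_eq_mul_inv]
  have hfin : ∫⁻ ω, ENNReal.ofReal (s ^ Z ω) ∂μ < ⊤ := by
    rw [hlint]; exact ENNReal.ofReal_lt_top
  have hnn : 0 ≤ᵐ[μ] fun ω => Real.exp (Real.log s * (Z ω : ℝ)) :=
    Filter.Eventually.of_forall (fun ω => (Real.exp_pos _).le)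
  have hmeas' : Measurable (fun ω => Real.exp (Real.log s * (Z ω : ℝ))) := by
    have : (fun ω => Real.exp (Real.log s * (Z ω : ℝ))) = fun ω => s ^ Z ω := by
      funext ω; exact hpoint ω
    rw [this]; exact hmeaspow
  have hint : Integrable (fun ω => Real.exp (Real.log s * (Z ω : ℝ))) μ := by
    refine ⟨hmeas'.aestronglyMeasurable, ?_⟩
    rw [hasFiniteIntegral_iff_ofReal hnn]
    simpa only [hpoint] using hfin
  refine ⟨hint, ?_⟩
  rw [mgf]
  rw [integral_eq_lintegral_of_nonneg_ae hnn hmeas'.aestronglyMeasurable]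
  simp_rw [hpoint]
  rw [hlint, ENNReal.toReal_ofReal (by positivity)]

lemma geom_pmf {Ω : Type*} [MeasurableSpace Ω] (μ : Measure Ω) [IsProbabilityMeasure μ]
    (Z : Ω → ℕ) (q pp : ℝ) (hq : q = 1 - pp)
    (hg : ∀ j : ℕ, 1 ≤ j → (μ {ω | Z ω = j}).toReal = (1 - pp) ^ (j - 1) * pp)
    (j : ℕ) : μ (Z ⁻¹' {j + 1}) = ENNReal.ofReal (q ^ j * pp) := by
  have h1 : (μ {ω | Z ω = j + 1}).toReal = (1 - pp) ^ j * pp := by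
    simpa using hg (j + 1) (by omega)
  have h2 : μ (Z ⁻¹' {j + 1}) = μ {ω | Z ω = j + 1} := rfl
  rw [h2, ← ENNReal.ofReal_toReal (measure_ne_top μ _), h1, hq]


lemma geom_tail {Ω : Type*} [MeasurableSpace Ω] (μ : Measure Ω) [IsProbabilityMeasure μ]
    (Z : Ω → ℕ) (hZ : Measurable Z) (q pp : ℝ) (hq : q = 1 - pp)
    (hp0 : 0 < pp) (hp1 : pp ≤ 1)
    (hg : ∀ j : ℕ, 1 ≤ j → (μ {ω | Z ω = j}).toReal = (1 - pp) ^ (j - 1) * pp)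
    (k : ℕ) :
    μ {ω | k + 1 ≤ Z ω} = ENNReal.ofReal (q ^ k) := by
  have hq0 : 0 ≤ q := by rw [hq]; linarith
  have hq1 : q < 1 := by rw [hq]; linarith
  have hset : {ω | k + 1 ≤ Z ω} = ⋃ d : ℕ, Z ⁻¹' {k + 1 + d} := by
    ext ω
    simp only [Set.mem_setOf_eq, Set.mem_iUnion, Set.mem_preimage, Set.mem_singleton_iff]
    constructor
    · intro h; exact ⟨Z ω - (k + 1), by omega⟩
    · rintro ⟨d, hd⟩; omega
  rw [hset, measure_iUnion ?_ (fun d => hZ (measurableSet_singleton _))]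
  · have hterm : ∀ d : ℕ, μ (Z ⁻¹' {k + 1 + d}) = ENNReal.ofReal (q ^ k * pp * q ^ d) := by
      intro d
      have := geom_pmf μ Z q pp hq hg (k + d)
      rw [show k + 1 + d = (k + d) + 1 by omega, this]
      congr 1
      rw [pow_add]
      ring
    simp_rw [hterm]
    rw [← ENNReal.ofReal_tsum_of_nonneg (fun d => by positivity)
        (by exact (summable_geometric_of_lt_one hq0 hq1).mul_left _)]
    congr 1
    rw [tsum_mul_left, tsum_geometric_of_lt_one hq0 hq1]
    have hqp : 1 - q = pp := by rw [hq]; ring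
    rw [mul_assoc, mul_comm pp, ← mul_assoc, mul_assoc, hqp]
    field_simp
  · intro d e hde
    simp only [Function.onFun]
    apply Set.disjoint_left.mpr
    intro ω h1 h2
    simp only [Set.mem_preimage, Set.mem_singleton_iff] at h1 h2
    omega


section main

set_option maxHeartbeats 1000000 in
open Finset in
/-- Tail bound for a sum `X = X₁ + ⋯ + Xₙ` of `n ≥ 1` independent geometric random
variables with parameters `p₁, …, pₙ ∈ (0, 1]`: with `μ = E[X] = ∑ᵢ 1 / pᵢ`,
for every real `λ ≥ 1` we have `P[X ≥ λ μ] ≤ e^(1 - λ)`. -/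
theorem stmt_1 {Ω : Type*} [MeasurableSpace Ω] (μ : Measure Ω) [IsProbabilityMeasure μ]
    (n : ℕ) (hn : 1 ≤ n) (p : Fin n → ℝ) (hp : ∀ i, p i ∈ Set.Ioc (0 : ℝ) 1)
    (X : Fin n → Ω → ℕ)
    (hmeas : ∀ i, Measurable (X i))
    (hpos : ∀ i, ∀ ω, 1 ≤ X i ω)
    (hindep : iIndepFun X μ)
    (hgeom : ∀ i, ∀ j : ℕ, 1 ≤ j →
      (μ {ω | X i ω = j}).toReal = (1 - p i) ^ (j - 1) * p i)
    (lam : ℝ) (hlam : 1 ≤ lam) :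
    (μ {ω | lam * (∑ i, 1 / p i) ≤ (∑ i, (X i ω : ℝ))}).toReal ≤ Real.exp (1 - lam) := by
  classical
  have htoReal_le_one : ∀ S : Set Ω, (μ S).toReal ≤ 1 := by
    intro S
    rw [← ENNReal.toReal_one]
    exact ENNReal.toReal_mono ENNReal.one_ne_top prob_le_one
  rcases eq_or_lt_of_le hlam with hlam1 | hlam1
  · rw [← hlam1, sub_self, Real.exp_zero]
    exact htoReal_le_one _
  -- now 1 < lam
  have hnR : (1:ℝ) ≤ (n:ℝ) := by exact_mod_cast hn
  have hne : (Finset.univ : Finset (Fin n)).Nonempty := ⟨⟨0, hn⟩, Finset.mem_univ _⟩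
  obtain ⟨i0, -, hi0⟩ := Finset.exists_min_image Finset.univ p hne
  have hp0 : 0 < p i0 := (hp i0).1
  by_cases hdeg : p i0 = 1
  · -- degenerate case : all pᵢ = 1, X = n a.s.
    have hall : ∀ i, p i = 1 := fun i =>
      le_antisymm (hp i).2 (by rw [← hdeg]; exact hi0 i (Finset.mem_univ i))
    have hXi : ∀ i, μ {ω | X i ω = 1} = 1 := by
      intro i
      have h1 : (μ {ω | X i ω = 1}).toReal = 1 := by
        simpa [hall i] using hgeom i 1 le_rfl
      rw [← ENNReal.ofReal_toReal (measure_ne_top μ _), h1, ENNReal.ofReal_one]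
    have hμt : (∑ i, 1 / p i) = (n : ℝ) := by
      simp [hall]
    have hsub : {ω | lam * (∑ i, 1 / p i) ≤ (∑ i, (X i ω : ℝ))}
        ⊆ ⋃ i, {ω | X i ω = 1}ᶜ := by
      intro ω hω
      simp only [Set.mem_setOf_eq, hμt] at hω
      by_contra hcon
      simp only [Set.mem_iUnion, Set.mem_compl_iff, Set.mem_setOf_eq, not_exists,
        not_not] at hcon
      have hsum : (∑ i, (X i ω : ℝ)) = n := by
        rw [Finset.sum_congr rfl (fun i _ => by rw [hcon i, Nat.cast_one])]
        simp
      rw [hsum] at hω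
      nlinarith
    have hzero : μ (⋃ i, {ω | X i ω = 1}ᶜ) = 0 := by
      refine measure_iUnion_null fun i => ?_
      have hms : MeasurableSet {ω | X i ω = 1} := hmeas i (measurableSet_singleton 1)
      rw [measure_compl hms (measure_ne_top μ _), hXi i, measure_univ, tsub_self]
    have hE0 : μ {ω | lam * (∑ i, 1 / p i) ≤ (∑ i, (X i ω : ℝ))} = 0 :=
      measure_mono_null hsub hzero
    rw [hE0]
    simp [Real.exp_nonneg]
  · -- main case
    have hplt1 : p i0 < 1 := lt_of_le_of_ne (hp i0).2 hdeg
    obtain ⟨q0, hq0def⟩ : ∃ q0 : ℝ, q0 = 1 - p i0 := ⟨_, rfl⟩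
    have hq0pos : 0 < q0 := by rw [hq0def]; linarith
    obtain ⟨M, hMdef⟩ : ∃ M : ℝ, M = q0 / p i0 := ⟨_, rfl⟩
    have hM : 0 < M := hMdef ▸ div_pos hq0pos hp0
    obtain ⟨u, hu⟩ : ∃ u : Finset (Fin n), u = Finset.univ.erase i0 := ⟨_, rfl⟩
    have hi0u : i0 ∉ u := hu ▸ Finset.notMem_erase i0 Finset.univ
    have hucard : (u.card : ℝ) = (n : ℝ) - 1 := by
      rw [hu, Finset.card_erase_of_mem (Finset.mem_univ i0)]
      simp only [Finset.card_univ, Fintype.card_fin]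
      rw [Nat.cast_sub hn, Nat.cast_one]
    -- ratios
    obtain ⟨a, ha⟩ : ∃ a : Fin n → ℝ, a = fun i => (1 - p i) / p i / M := ⟨_, rfl⟩
    have haeq : ∀ i, a i = (1 - p i) / p i / M := fun i => by rw [ha]
    have hannR : ∀ i, 0 ≤ a i := by
      intro i
      rw [haeq i]
      have h1 : (0:ℝ) ≤ (1 - p i) / p i := div_nonneg (by linarith [(hp i).2]) (hp i).1.le
      exact div_nonneg h1 hM.le
    have hale1 : ∀ i, a i ≤ 1 := by
      intro i
      rw [haeq i, div_le_one hM, hMdef, hq0def]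
      have h2 := (hp i).1
      have h3 := (hp i).2
      have h4 := hi0 i (Finset.mem_univ i)
      rw [div_le_div_iff₀ h2 hp0]
      nlinarith
    obtain ⟨c, hc⟩ : ∃ c : ℝ, c = ∑ i ∈ u, a i := ⟨_, rfl⟩
    have hc0 : 0 ≤ c := hc ▸ Finset.sum_nonneg fun i _ => hannR i
    have hcn : c ≤ (n:ℝ) - 1 := by
      rw [hc]
      calc (∑ i ∈ u, a i) ≤ ∑ i ∈ u, (1:ℝ) := Finset.sum_le_sum fun i _ => hale1 i
      _ = (u.card : ℝ) := by rw [Finset.sum_const, nsmul_eq_mul, mul_one]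
      _ = (n:ℝ) - 1 := hucard
    -- mean identity
    have hoverp : ∀ i, 1 / p i = 1 + a i * M := by
      intro i
      have hpne := (hp i).1.ne'
      rw [haeq i, div_mul_cancel₀ _ hM.ne']
      field_simp
      ring
    have hai0 : a i0 = 1 := by
      rw [haeq i0, ← hq0def, ← hMdef]
      exact div_self hM.ne'
    have hμteq : (∑ i, 1 / p i) = (n:ℝ) + M + c * M := by
      rw [Finset.sum_congr rfl (fun i _ => hoverp i), Finset.sum_add_distrib]
      simp only [Finset.sum_const, Finset.card_univ, Fintype.card_fin, nsmul_eq_mul, mul_one]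
      have hsplit : (∑ i ∈ u, a i * M) + a i0 * M = ∑ i : Fin n, a i * M := by
        rw [hu]
        exact Finset.sum_erase_add _ _ (Finset.mem_univ i0)
      rw [← hsplit, hai0, one_mul, ← Finset.sum_mul, ← hc]
      ring
    -- get x from the key inequality
    obtain ⟨x, hx0, hx1, hxc, hkey⟩ := key_ineq lam (n:ℝ) M c hlam hnR hM hc0 hcn
    obtain ⟨s, hsdef⟩ : ∃ s : ℝ, s = 1 + x / M := ⟨_, rfl⟩
    have hs1 : 1 ≤ s := by
      rw [hsdef]
      have : 0 ≤ x / M := div_nonneg hx0 hM.le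
      linarith
    have hsp : 0 < s := by linarith
    obtain ⟨t, htdef⟩ : ∃ t : ℝ, t = Real.log s := ⟨_, rfl⟩
    have ht0 : 0 ≤ t := htdef ▸ Real.log_nonneg hs1
    -- bound for the minimal-index variable
    have hMp : M * p i0 = q0 := by
      rw [hMdef, div_mul_cancel₀ _ hp0.ne']
    have hq0s : q0 * s ≤ 1 := by
      have h1 : q0 * s = q0 + p i0 * x := by
        rw [hsdef, mul_add, mul_one, ← hMp]
        field_simp
      have h2 : p i0 * x ≤ p i0 * 1 := mul_le_mul_of_nonneg_left hx1 hp0.le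
      rw [hq0def] at h1 ⊢
      linarith
    -- per-variable bound for i ∈ u
    have haxlt1 : ∀ i ∈ u, a i * x < 1 := by
      intro i hiu
      rcases eq_or_lt_of_le (hannR i) with h0 | hpos'
      · rw [← h0]; norm_num
      · have hcpos : 0 < c := by
          rw [hc]
          exact lt_of_lt_of_le hpos' (Finset.single_le_sum (fun j _ => hannR j) hiu)
        have hxlt1 := hxc hcpos
        calc a i * x ≤ 1 * x := mul_le_mul_of_nonneg_right (hale1 i) hx0
        _ = x := one_mul x
        _ < 1 := hxlt1
    have hdenom : ∀ i, 1 - (1 - p i) * s = p i * (1 - a i * x) := by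
      intro i
      rw [hsdef, haeq i]
      have hpne := (hp i).1.ne'
      field_simp
      ring
    have hqsi : ∀ i ∈ u, (1 - p i) * s < 1 := by
      intro i hiu
      have h1 := hdenom i
      have h2 : 0 < p i * (1 - a i * x) :=
        mul_pos (hp i).1 (by linarith [haxlt1 i hiu])
      linarith
    -- mgf facts for i ∈ u
    have hmgf : ∀ i ∈ u,
        Integrable (fun ω => Real.exp (t * (X i ω : ℝ))) μ ∧
        mgf (fun ω => (X i ω : ℝ)) μ t
          = p i * s / (1 - (1 - p i) * s) := by
      intro i hiu
      rw [htdef]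
      exact geom_mgf μ (X i) (hmeas i) (p i) s (hp i).1 (hp i).2 hs1
        (hqsi i hiu) (hpos i) (hgeom i)
    -- real-valued family
    have hXrmeas : ∀ i : Fin n, Measurable (fun ω => (X i ω : ℝ)) := fun i =>
      (measurable_from_nat (f := (Nat.cast : ℕ → ℝ))).comp (hmeas i)
    have hiIndepR : iIndepFun
        (fun i => fun ω => (X i ω : ℝ)) μ := by
      have := hindep.comp (fun _ => (Nat.cast : ℕ → ℝ))
        (fun _ => measurable_from_nat)
      exact this
    -- the ℕ-valued partial sum
    set Y : Ω → ℕ := ∑ i ∈ u, X i with hYdef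
    have hYapp : ∀ ω, Y ω = ∑ i ∈ u, X i ω := by
      intro ω
      rw [hYdef, Finset.sum_apply]
    have hYmeas : Measurable Y := by
      have h := Finset.measurable_sum u (fun i _ => hmeas i)
      have heq : (fun ω => ∑ i ∈ u, X i ω) = Y := by
        funext ω
        rw [hYapp ω]
      rwa [heq] at h
    have hYindep : IndepFun Y (X i0) μ :=
      hindep.indepFun_finsetSum_of_notMem hmeas hi0u
    -- tail bound for X i0
    have hexp_t : Real.exp t = s := by rw [htdef, Real.exp_log hsp]
    have htail : ∀ r : ℝ, μ {ω | r ≤ (X i0 ω : ℝ)}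
        ≤ ENNReal.ofReal (Real.exp (t * (1 - r))) := by
      intro r
      by_cases hr : r ≤ 1
      · calc μ {ω | r ≤ (X i0 ω : ℝ)} ≤ 1 := prob_le_one
        _ = ENNReal.ofReal 1 := ENNReal.ofReal_one.symm
        _ ≤ ENNReal.ofReal (Real.exp (t * (1 - r))) :=
            ENNReal.ofReal_le_ofReal
              (Real.one_le_exp (mul_nonneg ht0 (by linarith)))
      · push_neg at hr
        set k : ℕ := ⌈r⌉₊ with hk
        have hk1 : 1 ≤ k := by
          rw [hk]
          exact Nat.one_le_ceil_iff.mpr (by linarith)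
        have hrk : r ≤ (k : ℝ) := Nat.le_ceil r
        have hseteq : {ω | r ≤ (X i0 ω : ℝ)} = {ω | k ≤ X i0 ω} := by
          ext ω
          simp only [Set.mem_setOf_eq]
          exact ⟨fun h => Nat.ceil_le.mpr h, fun h => le_trans hrk (by exact_mod_cast h)⟩
        have hkm : k - 1 + 1 = k := by omega
        have hμtail : μ {ω | k ≤ X i0 ω} = ENNReal.ofReal (q0 ^ (k - 1)) := by
          rw [← hkm]
          rw [hq0def]
          exact geom_tail μ (X i0) (hmeas i0) (1 - p i0) (p i0) rfl hp0 (hp i0).2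
            (hgeom i0) (k - 1)
        rw [hseteq, hμtail]
        apply ENNReal.ofReal_le_ofReal
        have hq0le : q0 ≤ Real.exp (-t) := by
          rw [Real.exp_neg, hexp_t, ← one_div]
          exact (le_div_iff₀ hsp).mpr hq0s
        calc q0 ^ (k - 1) ≤ Real.exp (-t) ^ (k - 1) :=
              pow_le_pow_left₀ hq0pos.le hq0le (k - 1)
        _ = Real.exp (-t * (k - 1 : ℕ)) := by
              rw [mul_comm, Real.exp_nat_mul]
        _ ≤ Real.exp (t * (1 - r)) := by
              apply Real.exp_le_exp.mpr
              rw [Nat.cast_sub hk1, Nat.cast_one]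
              have : (0:ℝ) ≤ t * ((k:ℝ) - r) := mul_nonneg ht0 (by linarith)
              nlinarith
    -- decomposition of the event
    set Eset : Set Ω := {ω | lam * (∑ i, 1 / p i) ≤ (∑ i, (X i ω : ℝ))} with hEdef
    have hsplitpt : ∀ ω, (∑ i, (X i ω : ℝ)) = (Y ω : ℝ) + (X i0 ω : ℝ) := by
      intro ω
      have h1 : (∑ i ∈ u, (X i ω : ℝ)) + (X i0 ω : ℝ) = ∑ i, (X i ω : ℝ) := by
        rw [hu]
        exact Finset.sum_erase_add _ _ (Finset.mem_univ i0)
      have h2 : (Y ω : ℝ) = ∑ i ∈ u, (X i ω : ℝ) := by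
        rw [hYapp ω, Nat.cast_sum]
      linarith
    have hEdec : Eset = ⋃ b : ℕ,
        (Y ⁻¹' {b} ∩ (X i0) ⁻¹' {m : ℕ | lam * (∑ i, 1 / p i) - b ≤ (m : ℝ)}) := by
      ext ω
      simp only [hEdef, Set.mem_setOf_eq, Set.mem_iUnion, Set.mem_inter_iff,
        Set.mem_preimage, Set.mem_singleton_iff]
      constructor
      · intro h
        exact ⟨Y ω, rfl, by have := hsplitpt ω; linarith⟩
      · rintro ⟨b, hb, h2⟩
        have := hsplitpt ω
        rw [hb] at this
        linarith
    have hEmeas : μ Eset = ∑' b : ℕ,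
        μ (Y ⁻¹' {b}) * μ ((X i0) ⁻¹' {m : ℕ | lam * (∑ i, 1 / p i) - b ≤ (m : ℝ)}) := by
      rw [hEdec, measure_iUnion]
      · refine tsum_congr fun b => ?_
        exact hYindep.measure_inter_preimage_eq_mul {b}
          {m : ℕ | lam * (∑ i, 1 / p i) - b ≤ (m : ℝ)}
          (measurableSet_singleton b) MeasurableSet.of_discrete
      · intro b b' hbb'
        simp only [Function.onFun]
        refine Set.disjoint_left.mpr fun ω h1 h2 => hbb' ?_
        simp only [Set.mem_inter_iff, Set.mem_preimage, Set.mem_singleton_iff] at h1 h2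
        rw [← h1.1, ← h2.1]
      · intro b
        exact (hYmeas (measurableSet_singleton b)).inter
          ((hmeas i0) MeasurableSet.of_discrete)
    -- bound each term
    have hterm : ∀ b : ℕ,
        μ (Y ⁻¹' {b}) * μ ((X i0) ⁻¹' {m : ℕ | lam * (∑ i, 1 / p i) - b ≤ (m : ℝ)})
        ≤ ENNReal.ofReal (Real.exp (t * (1 - lam * (∑ i, 1 / p i))))
          * (ENNReal.ofReal (Real.exp (t * b)) * μ (Y ⁻¹' {b})) := by
      intro b
      have h1 : (X i0) ⁻¹' {m : ℕ | lam * (∑ i, 1 / p i) - b ≤ (m : ℝ)}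
          = {ω | lam * (∑ i, 1 / p i) - b ≤ (X i0 ω : ℝ)} := rfl
      have h2 := htail (lam * (∑ i, 1 / p i) - b)
      rw [h1] at *
      calc μ (Y ⁻¹' {b}) * μ {ω | lam * (∑ i, 1 / p i) - b ≤ (X i0 ω : ℝ)}
          ≤ μ (Y ⁻¹' {b}) * ENNReal.ofReal (Real.exp (t * (1 - (lam * (∑ i, 1 / p i) - b))))
            := mul_le_mul_right h2 _
      _ = ENNReal.ofReal (Real.exp (t * (1 - lam * (∑ i, 1 / p i))))
            * (ENNReal.ofReal (Real.exp (t * b)) * μ (Y ⁻¹' {b})) := by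
          rw [show t * (1 - (lam * (∑ i, 1 / p i) - b))
              = t * (1 - lam * (∑ i, 1 / p i)) + t * b by ring]
          rw [Real.exp_add, ENNReal.ofReal_mul (Real.exp_nonneg _)]
          ring
    -- sum up
    have hEbound : μ Eset ≤ ENNReal.ofReal (Real.exp (t * (1 - lam * (∑ i, 1 / p i))))
        * ∑' b : ℕ, ENNReal.ofReal (Real.exp (t * b)) * μ (Y ⁻¹' {b}) := by
      rw [hEmeas, ← ENNReal.tsum_mul_left]
      exact ENNReal.tsum_le_tsum hterm
    -- identify the sum with the product of mgfs
    have hYr_app : ∀ ω, (∑ i ∈ u, (fun i => fun ω => (X i ω : ℝ)) i) ω = ((Y ω : ℕ) : ℝ) := by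
      intro ω
      rw [Finset.sum_apply, hYapp ω, Nat.cast_sum]
    have hYr_int : Integrable
        (fun ω => Real.exp (t * (∑ i ∈ u, (fun i => fun ω => (X i ω : ℝ)) i) ω)) μ :=
      iIndepFun.integrable_exp_mul_sum hiIndepR (fun i => hXrmeas i)
        (fun i hi => (hmgf i hi).1)
    have hsum_eq : (∑' b : ℕ, ENNReal.ofReal (Real.exp (t * b)) * μ (Y ⁻¹' {b}))
        = ENNReal.ofReal (∏ i ∈ u, (p i * s / (1 - (1 - p i) * s))) := by
      rw [← lintegral_comp_nat' μ Y hYmeas (fun b => ENNReal.ofReal (Real.exp (t * b)))]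
      have hptwise : ∀ ω, ENNReal.ofReal (Real.exp (t * (Y ω : ℝ)))
          = ENNReal.ofReal (Real.exp (t * (∑ i ∈ u, (fun i => fun ω => (X i ω : ℝ)) i) ω)) := by
        intro ω
        rw [hYr_app ω]
      simp_rw [hptwise]
      rw [← ofReal_integral_eq_lintegral_ofReal hYr_int
        (Filter.Eventually.of_forall fun ω => (Real.exp_pos _).le)]
      congr 1
      have hmgfY := iIndepFun.mgf_sum hiIndepR (fun i => hXrmeas i) u (t := t)
      have : (∫ ω, Real.exp (t * (∑ i ∈ u, (fun i => fun ω => (X i ω : ℝ)) i) ω) ∂μ)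
          = mgf (∑ i ∈ u, (fun i => fun ω => (X i ω : ℝ)) i) μ t := rfl
      rw [this, hmgfY]
      exact Finset.prod_congr rfl fun i hi => (hmgf i hi).2
    -- to real numbers
    have hprod_nonneg : (0:ℝ) ≤ ∏ i ∈ u, (p i * s / (1 - (1 - p i) * s)) := by
      refine Finset.prod_nonneg fun i hi => ?_
      have h2 : 0 < 1 - (1 - p i) * s := by linarith [hqsi i hi]
      exact div_nonneg (mul_nonneg (hp i).1.le hsp.le) h2.le
    have htoReal : (μ Eset).toReal ≤ Real.exp (t * (1 - lam * (∑ i, 1 / p i)))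
        * ∏ i ∈ u, (p i * s / (1 - (1 - p i) * s)) := by
      apply ENNReal.toReal_le_of_le_ofReal
        (mul_nonneg (Real.exp_nonneg _) hprod_nonneg)
      calc μ Eset ≤ _ := hEbound
      _ = ENNReal.ofReal _ := by
          rw [hsum_eq, ← ENNReal.ofReal_mul (Real.exp_nonneg _)]
    -- final numeric bound
    have hfactor : ∀ i ∈ u, p i * s / (1 - (1 - p i) * s)
        ≤ Real.exp (t - a i * Real.log (1 - x)) := by
      intro i hiu
      have hax := haxlt1 i hiu
      have hfac_eq : p i * s / (1 - (1 - p i) * s) = s / (1 - a i * x) := by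
        rw [hdenom i, mul_div_mul_left _ _ (hp i).1.ne']
      rw [hfac_eq]
      rcases eq_or_lt_of_le (hannR i) with h0 | hapos
      · rw [← h0]
        simp [hexp_t]
      · have hcpos : 0 < c := by
          rw [hc]
          exact lt_of_lt_of_le hapos (Finset.single_le_sum (fun j _ => hannR j) hiu)
        have hxlt1 := hxc hcpos
        have h1x : (0:ℝ) < 1 - x := by linarith
        have hgm : Real.exp (a i * Real.log (1 - x)) ≤ 1 - a i * x := by
          have hrpow : (1 - x) ^ (a i) = Real.exp (a i * Real.log (1 - x)) := by
            rw [Real.rpow_def_of_pos h1x, mul_comm]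
          have := Real.geom_mean_le_arith_mean2_weighted (hannR i)
            (by linarith [hale1 i] : (0:ℝ) ≤ 1 - a i) h1x.le zero_le_one
            (by ring : a i + (1 - a i) = 1)
          rw [Real.one_rpow, mul_one, hrpow] at this
          calc Real.exp (a i * Real.log (1 - x)) ≤ a i * (1 - x) + (1 - a i) * 1 := this
          _ = 1 - a i * x := by ring
        have hexp_pos : (0:ℝ) < Real.exp (a i * Real.log (1 - x)) := Real.exp_pos _
        calc s / (1 - a i * x) ≤ s / Real.exp (a i * Real.log (1 - x)) := by
              apply div_le_div_of_nonneg_left hsp.le hexp_pos hgm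
        _ = Real.exp (t - a i * Real.log (1 - x)) := by
              rw [← hexp_t, ← Real.exp_sub]
    have hprod_le : (∏ i ∈ u, (p i * s / (1 - (1 - p i) * s)))
        ≤ Real.exp (((n:ℝ) - 1) * t - c * Real.log (1 - x)) := by
      calc (∏ i ∈ u, (p i * s / (1 - (1 - p i) * s)))
          ≤ ∏ i ∈ u, Real.exp (t - a i * Real.log (1 - x)) := by
            refine Finset.prod_le_prod (fun i hi => ?_) hfactor
            have h2 : 0 < 1 - (1 - p i) * s := by linarith [hqsi i hi]
            exact div_nonneg (mul_nonneg (hp i).1.le hsp.le) h2.le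
      _ = Real.exp (∑ i ∈ u, (t - a i * Real.log (1 - x))) := (Real.exp_sum u _).symm
      _ = Real.exp (((n:ℝ) - 1) * t - c * Real.log (1 - x)) := by
            congr 1
            rw [Finset.sum_sub_distrib, Finset.sum_const, ← Finset.sum_mul, ← hc,
              nsmul_eq_mul, hucard]
    have hkey' : lam - 1 ≤ (lam * (∑ i, 1 / p i) - n) * t + c * Real.log (1 - x) := by
      rw [hμteq]
      have hts : Real.log (1 + x / M) = t := by rw [← hsdef, ← htdef]
      rw [← hts]
      exact hkey
    calc (μ Eset).toReal
        ≤ Real.exp (t * (1 - lam * (∑ i, 1 / p i)))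
          * ∏ i ∈ u, (p i * s / (1 - (1 - p i) * s)) := htoReal
    _ ≤ Real.exp (t * (1 - lam * (∑ i, 1 / p i)))
          * Real.exp (((n:ℝ) - 1) * t - c * Real.log (1 - x)) :=
        mul_le_mul_of_nonneg_left hprod_le (Real.exp_nonneg _)
    _ = Real.exp (t * (1 - lam * (∑ i, 1 / p i))
          + (((n:ℝ) - 1) * t - c * Real.log (1 - x))) := (Real.exp_add _ _).symm
    _ ≤ Real.exp (1 - lam) := by
        apply Real.exp_le_exp.mpr
        linarith [hkey']

end main
end

section
/- Let X = X₁ + ⋯ + Xₙ be a sum of n ≥ 1 independent geometric random variables with parameters p₁, …, pₙ ∈ (0, 1], and let μ = E[X] = Σᵢ 1/pᵢ. Let ε ∈ (0, 1] and let τ be a natural number with τ ≥ μ (ln(μ/ε) + 1). Then μ − Σ_{i=1}^{τ} P[X ≥ i] = Σ_{i=τ+1}^{∞} P[X ≥ i] < ε. -/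
open MeasureTheory ProbabilityTheory
open scoped ENNReal NNReal

lemma stmt2_real_geom_tail {p : ℝ} (hp0 : 0 < p) (hp1 : p ≤ 1) (m : ℕ) :
    ∑' k : ℕ, (1 - p) ^ (m + k) * p = (1 - p) ^ m := by
  have hx0 : (0:ℝ) ≤ 1 - p := by linarith
  have hx1 : 1 - p < 1 := by linarith
  have h : ∀ k : ℕ, (1 - p) ^ (m + k) * p = ((1 - p) ^ m * p) * (1 - p) ^ k := by
    intro k; rw [pow_add]; ring
  rw [tsum_congr h, tsum_mul_left, tsum_geometric_of_lt_one hx0 hx1]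
  have : 1 - (1 - p) = p := by ring
  rw [this]
  field_simp

lemma stmt2_summable_geom_tail {p : ℝ} (hp0 : 0 < p) (hp1 : p ≤ 1) (m : ℕ) :
    Summable (fun k : ℕ => (1 - p) ^ (m + k) * p) := by
  have hx0 : (0:ℝ) ≤ 1 - p := by linarith
  have hx1 : 1 - p < 1 := by linarith
  have h : (fun k : ℕ => (1 - p) ^ (m + k) * p) = fun k : ℕ => ((1 - p) ^ m * p) * (1 - p) ^ k := by
    funext k; rw [pow_add]; ring
  rw [h]
  exact (summable_geometric_of_lt_one hx0 hx1).mul_left _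

lemma stmt2_geom_tail_ennreal {p : ℝ} (hp0 : 0 < p) (hp1 : p ≤ 1) (m : ℕ) :
    ∑' k : ℕ, ENNReal.ofReal ((1 - p) ^ (m + k) * p) = ENNReal.ofReal ((1 - p) ^ m) := by
  have hx0 : (0:ℝ) ≤ 1 - p := by linarith
  rw [← ENNReal.ofReal_tsum_of_nonneg (fun k => mul_nonneg (pow_nonneg hx0 _) hp0.le)
    (stmt2_summable_geom_tail hp0 hp1 m), stmt2_real_geom_tail hp0 hp1 m]

lemma stmt2_real_geom_mean {p : ℝ} (hp0 : 0 < p) (hp1 : p ≤ 1) (m : ℕ) :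
    ∑' k : ℕ, ((k : ℝ) + 1) * ((1 - p) ^ (m + k) * p) = (1 - p) ^ m * (1 / p) := by
  have hx0 : (0:ℝ) ≤ 1 - p := by linarith
  have hx1 : 1 - p < 1 := by linarith
  have hnorm : ‖(1 - p)‖ < 1 := by rw [Real.norm_eq_abs, abs_of_nonneg hx0]; exact hx1
  have h : ∀ k : ℕ, ((k : ℝ) + 1) * ((1 - p) ^ (m + k) * p) =
      ((1 - p) ^ m * p) * ((k : ℝ) * (1 - p) ^ k) + ((1 - p) ^ m * p) * (1 - p) ^ k := by
    intro k; rw [pow_add]; ring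
  have hs1 : Summable (fun k : ℕ => ((1 - p) ^ m * p) * ((k : ℝ) * (1 - p) ^ k)) := by
    apply Summable.mul_left
    have := summable_pow_mul_geometric_of_norm_lt_one (R := ℝ) 1 hnorm
    simpa using this
  have hs2 : Summable (fun k : ℕ => ((1 - p) ^ m * p) * (1 - p) ^ k) :=
    (summable_geometric_of_lt_one hx0 hx1).mul_left _
  rw [tsum_congr h, Summable.tsum_add hs1 hs2, tsum_mul_left, tsum_mul_left,
    tsum_coe_mul_geometric_of_norm_lt_one hnorm, tsum_geometric_of_lt_one hx0 hx1]
  have hpne : p ≠ 0 := ne_of_gt hp0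
  have h1 : 1 - (1 - p) = p := by ring
  rw [h1]
  field_simp
  ring

lemma stmt2_summable_geom_mean {p : ℝ} (hp0 : 0 < p) (hp1 : p ≤ 1) (m : ℕ) :
    Summable (fun k : ℕ => ((k : ℝ) + 1) * ((1 - p) ^ (m + k) * p)) := by
  have hx0 : (0:ℝ) ≤ 1 - p := by linarith
  have hx1 : 1 - p < 1 := by linarith
  have hnorm : ‖(1 - p)‖ < 1 := by rw [Real.norm_eq_abs, abs_of_nonneg hx0]; exact hx1
  have h : (fun k : ℕ => ((k : ℝ) + 1) * ((1 - p) ^ (m + k) * p)) = fun k : ℕ =>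
      ((1 - p) ^ m * p) * ((k : ℝ) * (1 - p) ^ k) + ((1 - p) ^ m * p) * (1 - p) ^ k := by
    funext k; rw [pow_add]; ring
  rw [h]
  have hs1 : Summable (fun k : ℕ => ((1 - p) ^ m * p) * ((k : ℝ) * (1 - p) ^ k)) := by
    apply Summable.mul_left
    have := summable_pow_mul_geometric_of_norm_lt_one (R := ℝ) 1 hnorm
    simpa using this
  exact hs1.add ((summable_geometric_of_lt_one hx0 hx1).mul_left _)

lemma stmt2_geom_mean_ennreal {p : ℝ} (hp0 : 0 < p) (hp1 : p ≤ 1) (m : ℕ) :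
    ∑' k : ℕ, ENNReal.ofReal (((k : ℝ) + 1) * ((1 - p) ^ (m + k) * p))
      = ENNReal.ofReal ((1 - p) ^ m * (1 / p)) := by
  have hx0 : (0:ℝ) ≤ 1 - p := by linarith
  rw [← ENNReal.ofReal_tsum_of_nonneg (fun k => mul_nonneg (by positivity) (mul_nonneg (pow_nonneg hx0 _) hp0.le))
    (stmt2_summable_geom_mean hp0 hp1 m), stmt2_real_geom_mean hp0 hp1 m]

/-- Truncation of the tail-sum formula for the expectation of a sum `X` of `n ≥ 1`
independent geometric random variables with parameters `p₁, …, pₙ ∈ (0, 1]` and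
expectation `μ = ∑ᵢ 1 / pᵢ`: for every `ε ∈ (0, 1]` and every natural number
`τ ≥ μ (ln (μ / ε) + 1)`, we have
`μ - ∑_{i=1}^{τ} P[X ≥ i] = ∑_{i=τ+1}^{∞} P[X ≥ i] < ε`. -/
theorem stmt_2 {Ω : Type*} [MeasurableSpace Ω] (μ : Measure Ω) [IsProbabilityMeasure μ]
    (n : ℕ) (hn : 1 ≤ n) (p : Fin n → ℝ) (hp : ∀ i, p i ∈ Set.Ioc (0 : ℝ) 1)
    (X : Fin n → Ω → ℕ)
    (hmeas : ∀ i, Measurable (X i))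
    (hpos : ∀ i, ∀ ω, 1 ≤ X i ω)
    (hindep : iIndepFun X μ)
    (hgeom : ∀ i, ∀ j : ℕ, 1 ≤ j →
      (μ {ω | X i ω = j}).toReal = (1 - p i) ^ (j - 1) * p i)
    (ε : ℝ) (hε : ε ∈ Set.Ioc (0 : ℝ) 1)
    (τ : ℕ) (hτ : (∑ i, 1 / p i) * (Real.log ((∑ i, 1 / p i) / ε) + 1) ≤ (τ : ℝ)) :
    (∑ i, 1 / p i) - (∑ j ∈ Finset.Icc 1 τ, (μ {ω | j ≤ ∑ i, X i ω}).toReal)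
      = (∑' j : ℕ, (μ {ω | τ + 1 + j ≤ ∑ i, X i ω}).toReal) ∧
    (∑' j : ℕ, (μ {ω | τ + 1 + j ≤ ∑ i, X i ω}).toReal) < ε := by
  classical
  -- basic measurability
  have hmeasW : ∀ s : Finset (Fin n), Measurable fun ω => ∑ i ∈ s, X i ω :=
    fun s => Finset.measurable_sum s fun i _ => hmeas i
  have hmeasXj : ∀ (j : Fin n) (k : ℕ), MeasurableSet {ω | X j ω = k} := by
    intro j k
    have : {ω | X j ω = k} = X j ⁻¹' {k} := by ext ω; simp
    rw [this]; exact hmeas j .of_discrete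
  have hmeasTail : ∀ (s : Finset (Fin n)) (c : ℤ),
      MeasurableSet {ω | c ≤ ∑ i ∈ s, (X i ω : ℤ)} := by
    intro s c
    have : {ω | c ≤ ∑ i ∈ s, (X i ω : ℤ)}
        = (fun ω => ∑ i ∈ s, X i ω) ⁻¹' {w : ℕ | c ≤ (w : ℤ)} := by
      ext ω; simp only [Set.mem_setOf_eq, Set.mem_preimage, ← Nat.cast_sum]
    rw [this]; exact hmeasW s .of_discrete
  -- pmf facts
  have hqzero : ∀ j : Fin n, μ {ω | X j ω = 0} = 0 := by
    intro j
    have : {ω | X j ω = 0} = ∅ := by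
      ext ω; simp only [Set.mem_setOf_eq, Set.mem_empty_iff_false, iff_false]
      have := hpos j ω; omega
    rw [this, measure_empty]
  have hqsucc : ∀ (j : Fin n) (k : ℕ),
      μ {ω | X j ω = k + 1} = ENNReal.ofReal ((1 - p j) ^ k * p j) := by
    intro j k
    have h := hgeom j (k + 1) (Nat.le_add_left 1 k)
    rw [← ENNReal.ofReal_toReal (measure_ne_top μ {ω | X j ω = k + 1}), h]
    simp
  have hqtail : ∀ (j : Fin n) (T : ℕ),
      ∑' d : ℕ, μ {ω | X j ω = T + 1 + d} = ENNReal.ofReal ((1 - p j) ^ T) := by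
    intro j T
    have hidx : ∀ d : ℕ, T + 1 + d = (T + d) + 1 := fun d => by omega
    simp only [hidx, hqsucc j]
    exact stmt2_geom_tail_ennreal (hp j).1 (hp j).2 T
  have hqmass : ∀ j : Fin n, ∑' k : ℕ, μ {ω | X j ω = k} = 1 := by
    intro j
    have huniv : (Set.univ : Set Ω) = ⋃ k : ℕ, {ω | X j ω = k} := by
      ext ω; simp
    have hdisj : Pairwise (Function.onFun Disjoint fun k : ℕ => {ω | X j ω = k}) := by
      intro a b hab
      exact Set.disjoint_left.mpr fun ω h1 h2 => hab (h1.symm.trans h2)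
    rw [← measure_univ (μ := μ), huniv, measure_iUnion hdisj fun k => hmeasXj j k]
  have hqmean : ∀ j : Fin n,
      ∑' k : ℕ, (k : ℝ≥0∞) * μ {ω | X j ω = k} = ENNReal.ofReal (1 / p j) := by
    intro j
    rw [tsum_eq_zero_add' ENNReal.summable]
    simp only [Nat.cast_zero, zero_mul, zero_add]
    have h : ∀ k : ℕ, ((k + 1 : ℕ) : ℝ≥0∞) * μ {ω | X j ω = k + 1}
        = ENNReal.ofReal (((k : ℝ) + 1) * ((1 - p j) ^ (0 + k) * p j)) := by
      intro k
      rw [hqsucc j k, ← ENNReal.ofReal_natCast (k + 1),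
        ← ENNReal.ofReal_mul (by positivity), zero_add]
      push_cast
      ring_nf
    rw [tsum_congr h, stmt2_geom_mean_ennreal (hp j).1 (hp j).2 0]
    simp

  -- tail is 1 for nonpositive thresholds
  have hTail1 : ∀ (s : Finset (Fin n)) (c : ℤ), c ≤ 0 →
      μ {ω | c ≤ ∑ i ∈ s, (X i ω : ℤ)} = 1 := by
    intro s c hc
    have : {ω | c ≤ ∑ i ∈ s, (X i ω : ℤ)} = Set.univ := by
      ext ω
      simp only [Set.mem_setOf_eq, Set.mem_univ, iff_true]
      have : (0:ℤ) ≤ ∑ i ∈ s, (X i ω : ℤ) :=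
        Finset.sum_nonneg fun i _ => Int.natCast_nonneg _
      omega
    rw [this, measure_univ]
  -- decomposition via independence
  have hdec : ∀ (j : Fin n) (s : Finset (Fin n)), j ∉ s → ∀ c : ℤ,
      μ {ω | c ≤ ∑ i ∈ insert j s, (X i ω : ℤ)}
        = ∑' k : ℕ, μ {ω | X j ω = k} * μ {ω | c - (k:ℤ) ≤ ∑ i ∈ s, (X i ω : ℤ)} := by
    intro j s hj c
    have hind : IndepFun (∑ i ∈ s, X i) (X j) μ :=
      hindep.indepFun_finsetSum_of_notMem hmeas hj
    have hsplit : {ω | c ≤ ∑ i ∈ insert j s, (X i ω : ℤ)}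
        = ⋃ k : ℕ, ({ω | X j ω = k} ∩ {ω | c - (k:ℤ) ≤ ∑ i ∈ s, (X i ω : ℤ)}) := by
      ext ω
      simp only [Set.mem_setOf_eq, Set.mem_iUnion, Set.mem_inter_iff,
        Finset.sum_insert hj, ← Nat.cast_sum]
      constructor
      · intro h; exact ⟨X j ω, rfl, by omega⟩
      · rintro ⟨k, hk, h⟩; omega
    have hdisj : Pairwise (Function.onFun Disjoint fun k : ℕ =>
        {ω | X j ω = k} ∩ {ω | c - (k:ℤ) ≤ ∑ i ∈ s, (X i ω : ℤ)}) := by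
      intro a b hab
      refine Set.disjoint_left.mpr fun ω h1 h2 => hab ?_
      exact h1.1.symm.trans h2.1
    rw [hsplit, measure_iUnion hdisj fun k => (hmeasXj j k).inter (hmeasTail s _)]
    refine tsum_congr fun k => ?_
    have h1 : {ω | X j ω = k} = X j ⁻¹' {k} := by ext ω; simp
    have h2 : {ω | c - (k:ℤ) ≤ ∑ i ∈ s, (X i ω : ℤ)}
        = (∑ i ∈ s, X i) ⁻¹' {w : ℕ | c - (k:ℤ) ≤ (w : ℤ)} := by
      ext ω
      simp only [Set.mem_setOf_eq, Set.mem_preimage, Finset.sum_apply, ← Nat.cast_sum]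
    rw [h1, h2, Set.inter_comm,
      hind.measure_inter_preimage_eq_mul _ _ .of_discrete .of_discrete, mul_comm]

  -- overshoot lemma
  have OS : ∀ (s : Finset (Fin n)) (t : ℤ),
      (∑' m : ℕ, μ {ω | t + 1 + (m:ℤ) ≤ ∑ i ∈ s, (X i ω : ℤ)})
        ≤ ((∑ i ∈ s, ENNReal.ofReal (1 / p i)) + ((-t).toNat : ℝ≥0∞))
            * μ {ω | t + 1 ≤ ∑ i ∈ s, (X i ω : ℤ)} := by
    intro s
    induction s using Finset.induction_on with
    | empty =>
      intro t
      simp only [Finset.sum_empty]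
      by_cases ht : 0 ≤ t
      · have hz : ∀ m : ℕ, μ {ω | t + 1 + (m:ℤ) ≤ (0:ℤ)} = 0 := by
          intro m
          have he : {ω : Ω | t + 1 + (m:ℤ) ≤ (0:ℤ)} = ∅ := by
            ext ω; simp only [Set.mem_setOf_eq, Set.mem_empty_iff_false, iff_false]; omega
          rw [he, measure_empty]
        simp [hz]
      · push_neg at ht
        have hval : ∀ m : ℕ, μ {ω : Ω | t + 1 + (m:ℤ) ≤ (0:ℤ)}
            = if m ∈ Finset.range (-t).toNat then 1 else 0 := by
          intro m
          by_cases hm : m ∈ Finset.range (-t).toNat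
          · rw [if_pos hm]
            have he : {ω : Ω | t + 1 + (m:ℤ) ≤ (0:ℤ)} = Set.univ := by
              ext ω; simp only [Set.mem_setOf_eq, Set.mem_univ, iff_true]
              simp only [Finset.mem_range] at hm; omega
            rw [he, measure_univ]
          · rw [if_neg hm]
            have he : {ω : Ω | t + 1 + (m:ℤ) ≤ (0:ℤ)} = ∅ := by
              ext ω; simp only [Set.mem_setOf_eq, Set.mem_empty_iff_false, iff_false]
              simp only [Finset.mem_range, not_lt] at hm; omega
            rw [he, measure_empty]
        have hT1 : μ {ω : Ω | t + 1 ≤ (0:ℤ)} = 1 := by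
          have he : {ω : Ω | t + 1 ≤ (0:ℤ)} = Set.univ := by
            ext ω; simp only [Set.mem_setOf_eq, Set.mem_univ, iff_true]; omega
          rw [he, measure_univ]
        rw [hT1, tsum_congr hval, tsum_eq_sum (s := Finset.range (-t).toNat)
          (fun m hm => if_neg hm)]
        rw [Finset.sum_congr rfl (fun m hm => if_pos hm), Finset.sum_const, nsmul_eq_mul,
          mul_one, Finset.card_range]
        simp
    | @insert j s hj ih =>
      intro t
      have hp0 := (hp j).1
      have hp1 := (hp j).2
      rw [Finset.sum_insert hj]
      simp only [hdec j s hj]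
      have harr : ∀ (m k : ℕ), t + 1 + (m:ℤ) - (k:ℤ) = (t - (k:ℤ)) + 1 + (m:ℤ) := by
        intro m k; ring
      have harr2 : ∀ k : ℕ, t + 1 - (k:ℤ) = (t - (k:ℤ)) + 1 := by intro k; ring
      simp only [harr, harr2]
      rw [ENNReal.tsum_comm]
      simp only [ENNReal.tsum_mul_left]
      have key : (∑' k : ℕ, (((k:ℤ) - t).toNat : ℝ≥0∞) *
            (μ {ω | X j ω = k} * μ {ω | (t - (k:ℤ)) + 1 ≤ ∑ i ∈ s, (X i ω : ℤ)}))
          ≤ (ENNReal.ofReal (1 / p j) + ((-t).toNat : ℝ≥0∞)) *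
            ∑' k : ℕ, μ {ω | X j ω = k} * μ {ω | (t - (k:ℤ)) + 1 ≤ ∑ i ∈ s, (X i ω : ℤ)} := by
        by_cases ht : 0 ≤ t
        · obtain ⟨T, hT⟩ : ∃ T : ℕ, (T:ℤ) = t := ⟨t.toNat, Int.toNat_of_nonneg ht⟩
          subst hT
          have hslack0 : ((-(T:ℤ)).toNat : ℝ≥0∞) = 0 := by
            have : (-(T:ℤ)).toNat = 0 := by omega
            rw [this, Nat.cast_zero]
          rw [hslack0, add_zero]
          rw [← Summable.sum_add_tsum_nat_add' (f := fun k : ℕ => (((k:ℤ) - (T:ℤ)).toNat : ℝ≥0∞) *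
            (μ {ω | X j ω = k} * μ {ω | ((T:ℤ) - (k:ℤ)) + 1 ≤ ∑ i ∈ s, (X i ω : ℤ)}))
            (k := T + 1) ENNReal.summable]
          have hzero : (∑ k ∈ Finset.range (T + 1), (((k:ℤ) - (T:ℤ)).toNat : ℝ≥0∞) *
              (μ {ω | X j ω = k} * μ {ω | ((T:ℤ) - (k:ℤ)) + 1 ≤ ∑ i ∈ s, (X i ω : ℤ)})) = 0 := by
            refine Finset.sum_eq_zero fun k hk => ?_
            simp only [Finset.mem_range] at hk
            have : ((k:ℤ) - (T:ℤ)).toNat = 0 := by omega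
            rw [this, Nat.cast_zero, zero_mul]
          rw [hzero, zero_add]
          have hterm : ∀ d : ℕ, ((((d + (T + 1) : ℕ):ℤ) - (T:ℤ)).toNat : ℝ≥0∞) *
              (μ {ω | X j ω = d + (T + 1)} *
                μ {ω | ((T:ℤ) - ((d + (T + 1) : ℕ):ℤ)) + 1 ≤ ∑ i ∈ s, (X i ω : ℤ)})
              = ENNReal.ofReal (((d:ℝ) + 1) * ((1 - p j) ^ (T + d) * p j)) := by
            intro d
            have h1 : (((d + (T + 1) : ℕ):ℤ) - (T:ℤ)).toNat = d + 1 := by omega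
            have h2 : μ {ω | ((T:ℤ) - ((d + (T + 1) : ℕ):ℤ)) + 1 ≤ ∑ i ∈ s, (X i ω : ℤ)} = 1 :=
              hTail1 s _ (by push_cast; omega)
            have h3 : d + (T + 1) = (T + d) + 1 := by omega
            rw [h1, h2, h3, hqsucc j, mul_one, ← ENNReal.ofReal_natCast (d + 1),
              ← ENNReal.ofReal_mul (by positivity)]
            push_cast
            ring_nf
          rw [tsum_congr hterm, stmt2_geom_mean_ennreal hp0 hp1 T]
          have htail_le : ENNReal.ofReal ((1 - p j) ^ T)
              ≤ ∑' k : ℕ, μ {ω | X j ω = k} *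
                  μ {ω | ((T:ℤ) - (k:ℤ)) + 1 ≤ ∑ i ∈ s, (X i ω : ℤ)} := by
            rw [← Summable.sum_add_tsum_nat_add' (f := fun k : ℕ => μ {ω | X j ω = k} *
              μ {ω | ((T:ℤ) - (k:ℤ)) + 1 ≤ ∑ i ∈ s, (X i ω : ℤ)}) (k := T + 1)
              ENNReal.summable]
            have h : ∀ d : ℕ, μ {ω | X j ω = d + (T + 1)} *
                μ {ω | ((T:ℤ) - ((d + (T + 1) : ℕ):ℤ)) + 1 ≤ ∑ i ∈ s, (X i ω : ℤ)}
                = μ {ω | X j ω = T + 1 + d} := by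
              intro d
              rw [hTail1 s _ (by push_cast; omega), mul_one]
              have hd : d + (T + 1) = T + 1 + d := by omega
              rw [hd]
            have heq : (∑' d : ℕ, μ {ω | X j ω = d + (T + 1)} *
                μ {ω | ((T:ℤ) - ((d + (T + 1) : ℕ):ℤ)) + 1 ≤ ∑ i ∈ s, (X i ω : ℤ)})
                = ENNReal.ofReal ((1 - p j) ^ T) := by
              rw [tsum_congr h, hqtail j T]
            exact le_trans heq.symm.le le_add_self
          calc ENNReal.ofReal ((1 - p j) ^ T * (1 / p j))
              = ENNReal.ofReal (1 / p j) * ENNReal.ofReal ((1 - p j) ^ T) := by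
                rw [← ENNReal.ofReal_mul (by positivity)]; ring_nf
            _ ≤ ENNReal.ofReal (1 / p j) * ∑' k : ℕ, μ {ω | X j ω = k} *
                  μ {ω | ((T:ℤ) - (k:ℤ)) + 1 ≤ ∑ i ∈ s, (X i ω : ℤ)} :=
                mul_le_mul_right htail_le _
        · push_neg at ht
          have hr_all : ∀ k : ℕ, μ {ω | (t - (k:ℤ)) + 1 ≤ ∑ i ∈ s, (X i ω : ℤ)} = 1 :=
            fun k => hTail1 s _ (by omega)
          simp only [hr_all, mul_one]
          have hstep : ∀ k : ℕ, (((k:ℤ) - t).toNat : ℝ≥0∞) * μ {ω | X j ω = k}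
              = (k : ℝ≥0∞) * μ {ω | X j ω = k} + ((-t).toNat : ℝ≥0∞) * μ {ω | X j ω = k} := by
            intro k
            have : ((k:ℤ) - t).toNat = k + (-t).toNat := by omega
            rw [this]
            push_cast
            ring
          calc (∑' k : ℕ, (((k:ℤ) - t).toNat : ℝ≥0∞) * μ {ω | X j ω = k})
              = (∑' k : ℕ, (k : ℝ≥0∞) * μ {ω | X j ω = k})
                + ((-t).toNat : ℝ≥0∞) * ∑' k : ℕ, μ {ω | X j ω = k} := by
                rw [tsum_congr hstep, ENNReal.tsum_add, ENNReal.tsum_mul_left]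
            _ = ENNReal.ofReal (1 / p j) + ((-t).toNat : ℝ≥0∞) := by
                rw [hqmean j, hqmass j, mul_one]
            _ = (ENNReal.ofReal (1 / p j) + ((-t).toNat : ℝ≥0∞))
                  * ∑' k : ℕ, μ {ω | X j ω = k} := by rw [hqmass j, mul_one]
            _ ≤ (ENNReal.ofReal (1 / p j) + ((-t).toNat : ℝ≥0∞))
                  * ∑' k : ℕ, μ {ω | X j ω = k} := le_rfl
      calc (∑' k : ℕ, μ {ω | X j ω = k} *
            ∑' m : ℕ, μ {ω | (t - (k:ℤ)) + 1 + (m:ℤ) ≤ ∑ i ∈ s, (X i ω : ℤ)})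
          ≤ ∑' k : ℕ, μ {ω | X j ω = k} *
              (((∑ i ∈ s, ENNReal.ofReal (1 / p i)) + (((k:ℤ) - t).toNat : ℝ≥0∞))
                * μ {ω | (t - (k:ℤ)) + 1 ≤ ∑ i ∈ s, (X i ω : ℤ)}) := by
            refine ENNReal.tsum_le_tsum fun k => mul_le_mul_right ?_ _
            have h := ih (t - (k:ℤ))
            have hneg : -(t - (k:ℤ)) = (k:ℤ) - t := by ring
            rw [hneg] at h
            exact h
        _ = (∑ i ∈ s, ENNReal.ofReal (1 / p i)) *
              (∑' k : ℕ, μ {ω | X j ω = k} * μ {ω | (t - (k:ℤ)) + 1 ≤ ∑ i ∈ s, (X i ω : ℤ)})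
            + ∑' k : ℕ, (((k:ℤ) - t).toNat : ℝ≥0∞) *
                (μ {ω | X j ω = k} * μ {ω | (t - (k:ℤ)) + 1 ≤ ∑ i ∈ s, (X i ω : ℤ)}) := by
            rw [← ENNReal.tsum_mul_left, ← ENNReal.tsum_add]
            refine tsum_congr fun k => ?_
            ring
        _ ≤ (∑ i ∈ s, ENNReal.ofReal (1 / p i)) *
              (∑' k : ℕ, μ {ω | X j ω = k} * μ {ω | (t - (k:ℤ)) + 1 ≤ ∑ i ∈ s, (X i ω : ℤ)})
            + (ENNReal.ofReal (1 / p j) + ((-t).toNat : ℝ≥0∞)) *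
              (∑' k : ℕ, μ {ω | X j ω = k} * μ {ω | (t - (k:ℤ)) + 1 ≤ ∑ i ∈ s, (X i ω : ℤ)}) :=
            add_le_add_right key _
        _ = (ENNReal.ofReal (1 / p j) + ∑ i ∈ s, ENNReal.ofReal (1 / p i)
              + ((-t).toNat : ℝ≥0∞)) *
              (∑' k : ℕ, μ {ω | X j ω = k} * μ {ω | (t - (k:ℤ)) + 1 ≤ ∑ i ∈ s, (X i ω : ℤ)}) := by
            ring

  -- layer cake for ℕ-valued random variables
  have hlay : ∀ f : Ω → ℕ, Measurable f →
      (∑' m : ℕ, μ {ω | m + 1 ≤ f ω}) = ∫⁻ ω, (f ω : ℝ≥0∞) ∂μ := by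
    intro f hf
    have h1 : ∫⁻ ω, (f ω : ℝ≥0∞) ∂μ = ∑' k : ℕ, (k : ℝ≥0∞) * μ (f ⁻¹' {k}) := by
      have hmap := lintegral_map (μ := μ) (f := fun k : ℕ => (k : ℝ≥0∞)) (g := f)
        measurable_from_top hf
      rw [← hmap, lintegral_countable']
      refine tsum_congr fun k => ?_
      rw [Measure.map_apply hf (measurableSet_singleton k)]
    have h2 : ∀ m : ℕ, μ {ω | m + 1 ≤ f ω}
        = ∑' k : ℕ, (if m + 1 ≤ k then μ (f ⁻¹' {k}) else 0) := by
      intro m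
      have hu : {ω | m + 1 ≤ f ω} = ⋃ k : ℕ, (if m + 1 ≤ k then f ⁻¹' {k} else ∅) := by
        ext ω
        simp only [Set.mem_setOf_eq, Set.mem_iUnion]
        constructor
        · intro h
          refine ⟨f ω, ?_⟩
          rw [if_pos h]
          exact rfl
        · rintro ⟨k, hk⟩
          split_ifs at hk with h
          · have he : f ω = k := hk
            omega
          · exact absurd hk (Set.notMem_empty ω)
      have hdisj : Pairwise (Function.onFun Disjoint fun k : ℕ =>
          if m + 1 ≤ k then f ⁻¹' {k} else ∅) := by
        intro a b hab
        refine Set.disjoint_left.mpr fun ω h1 h2 => hab ?_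
        simp only [] at h1 h2
        split_ifs at h1 h2
        · have e1 : f ω = a := h1
          have e2 : f ω = b := h2
          omega
        · exact absurd h2 (Set.notMem_empty ω)
        · exact absurd h1 (Set.notMem_empty ω)
        · exact absurd h1 (Set.notMem_empty ω)
      rw [hu, measure_iUnion hdisj ?_]
      · refine tsum_congr fun k => ?_
        split_ifs
        · rfl
        · exact measure_empty
      · intro k
        split_ifs
        · exact hf .of_discrete
        · exact MeasurableSet.empty
    rw [h1]
    calc (∑' m : ℕ, μ {ω | m + 1 ≤ f ω})
        = ∑' m : ℕ, ∑' k : ℕ, (if m + 1 ≤ k then μ (f ⁻¹' {k}) else 0) := tsum_congr h2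
      _ = ∑' k : ℕ, ∑' m : ℕ, (if m + 1 ≤ k then μ (f ⁻¹' {k}) else 0) := ENNReal.tsum_comm
      _ = ∑' k : ℕ, (k : ℝ≥0∞) * μ (f ⁻¹' {k}) := by
          refine tsum_congr fun k => ?_
          rw [tsum_eq_sum (s := Finset.range k)
            (fun m hm => if_neg (by simp only [Finset.mem_range, not_lt] at hm; omega))]
          rw [Finset.sum_congr rfl fun m hm =>
            if_pos (by simp only [Finset.mem_range] at hm; omega)]
          rw [Finset.sum_const, Finset.card_range, nsmul_eq_mul]
  -- expectation of each geometric
  have hEi : ∀ i : Fin n, (∑' m : ℕ, μ {ω | m + 1 ≤ X i ω}) = ENNReal.ofReal (1 / p i) := by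
    intro i
    have hx0 : (0:ℝ) ≤ 1 - p i := by linarith [(hp i).2]
    have hx1 : 1 - p i < 1 := by linarith [(hp i).1]
    have hdecomp : ∀ m : ℕ, μ {ω | m + 1 ≤ X i ω} = ∑' d : ℕ, μ {ω | X i ω = m + 1 + d} := by
      intro m
      have hu : {ω | m + 1 ≤ X i ω} = ⋃ d : ℕ, {ω | X i ω = m + 1 + d} := by
        ext ω
        simp only [Set.mem_setOf_eq, Set.mem_iUnion]
        constructor
        · intro h; exact ⟨X i ω - (m + 1), by omega⟩
        · rintro ⟨d, hd⟩; omega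
      have hdisj : Pairwise (Function.onFun Disjoint fun d : ℕ => {ω | X i ω = m + 1 + d}) := by
        intro a b hab
        refine Set.disjoint_left.mpr fun ω h1 h2 => hab ?_
        simp only [Set.mem_setOf_eq] at h1 h2
        omega
      rw [hu, measure_iUnion hdisj fun d => hmeasXj i _]
    calc (∑' m : ℕ, μ {ω | m + 1 ≤ X i ω}) = ∑' m : ℕ, ENNReal.ofReal ((1 - p i) ^ m) := by
          refine tsum_congr fun m => ?_
          rw [hdecomp m, hqtail i m]
      _ = ENNReal.ofReal (∑' m : ℕ, (1 - p i) ^ m) :=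
          (ENNReal.ofReal_tsum_of_nonneg (fun m => pow_nonneg hx0 m)
            (summable_geometric_of_lt_one hx0 hx1)).symm
      _ = ENNReal.ofReal (1 / p i) := by
          rw [tsum_geometric_of_lt_one hx0 hx1]
          congr 1
          have hh : 1 - (1 - p i) = p i := by ring
          rw [hh, one_div]
  -- total expectation
  have hE : (∑' m : ℕ, μ {ω | m + 1 ≤ ∑ i, X i ω}) = ENNReal.ofReal (∑ i, 1 / p i) := by
    rw [hlay (fun ω => ∑ i, X i ω) (hmeasW Finset.univ)]
    have hcast : ∀ ω : Ω, ((∑ i, X i ω : ℕ) : ℝ≥0∞) = ∑ i, ((X i ω : ℕ) : ℝ≥0∞) :=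
      fun ω => Nat.cast_sum _ _
    simp only [hcast]
    have hcm : ∀ i : Fin n, Measurable fun ω : Ω => ((X i ω : ℕ) : ℝ≥0∞) :=
      fun i => measurable_from_top.comp (hmeas i)
    rw [lintegral_finset_sum Finset.univ (fun i _ => hcm i)]
    rw [Finset.sum_congr rfl fun i _ => ((hlay (X i) (hmeas i)).symm.trans (hEi i)),
      ← ENNReal.ofReal_sum_of_nonneg fun i _ => one_div_nonneg.mpr (hp i).1.le]

  -- ── final assembly ──
  set M : ℝ := ∑ i, 1 / p i with hMdef
  have hM0 : (0:ℝ) ≤ M := Finset.sum_nonneg fun i _ => one_div_nonneg.mpr (hp i).1.le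
  have hM1 : (1:ℝ) ≤ M := by
    have i0 : Fin n := ⟨0, hn⟩
    have h1 : (1:ℝ) ≤ 1 / p i0 := by
      rw [le_div_iff₀ (hp i0).1, one_mul]; exact (hp i0).2
    calc (1:ℝ) ≤ 1 / p i0 := h1
      _ ≤ M := Finset.single_le_sum (f := fun i => 1 / p i)
          (fun i _ => one_div_nonneg.mpr (hp i).1.le) (Finset.mem_univ i0)
  have hMpos : (0:ℝ) < M := lt_of_lt_of_le one_pos hM1
  -- key inequality in ℕ-threshold form
  have hkey : ∀ t : ℕ, (∑' m : ℕ, μ {ω | t + 1 + m ≤ ∑ i, X i ω})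
      ≤ ENNReal.ofReal M * μ {ω | t + 1 ≤ ∑ i, X i ω} := by
    intro t
    have h := OS Finset.univ (t : ℤ)
    have hidx : ∀ m : ℕ, {ω : Ω | (t:ℤ) + 1 + (m:ℤ) ≤ ∑ i, (X i ω : ℤ)}
        = {ω : Ω | t + 1 + m ≤ ∑ i, X i ω} := by
      intro m; ext ω; simp only [Set.mem_setOf_eq, ← Nat.cast_sum]; omega
    have hidx2 : {ω : Ω | (t:ℤ) + 1 ≤ ∑ i, (X i ω : ℤ)}
        = {ω : Ω | t + 1 ≤ ∑ i, X i ω} := by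
      ext ω; simp only [Set.mem_setOf_eq, ← Nat.cast_sum]; omega
    have hslack : ((-(t:ℤ)).toNat : ℝ≥0∞) = 0 := by
      have hz : (-(t:ℤ)).toNat = 0 := by omega
      rw [hz, Nat.cast_zero]
    rw [hidx2, hslack, add_zero] at h
    simp only [hidx] at h
    have hsum : (∑ i, ENNReal.ofReal (1 / p i)) = ENNReal.ofReal M := by
      rw [hMdef, ENNReal.ofReal_sum_of_nonneg fun i _ => one_div_nonneg.mpr (hp i).1.le]
    rwa [hsum] at h
  -- finiteness of the tails
  have hfin : ∀ t : ℕ, (∑' m : ℕ, μ {ω | t + 1 + m ≤ ∑ i, X i ω}) ≠ ⊤ := by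
    intro t
    have hle : (∑' m : ℕ, μ {ω | t + 1 + m ≤ ∑ i, X i ω})
        ≤ ∑' m : ℕ, μ {ω | m + 1 ≤ ∑ i, X i ω} := by
      refine ENNReal.tsum_le_tsum fun m => measure_mono fun ω h => ?_
      simp only [Set.mem_setOf_eq] at h ⊢; omega
    rw [hE] at hle
    exact ne_top_of_le_ne_top ENNReal.ofReal_ne_top hle
  -- geometric decay of the real tail sums
  have hbound : ∀ t : ℕ, (∑' m : ℕ, μ {ω | t + 1 + m ≤ ∑ i, X i ω}).toReal
      ≤ M * (1 - 1 / M) ^ t := by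
    intro t
    induction t with
    | zero =>
      have hidx : ∀ m : ℕ, (0:ℕ) + 1 + m = m + 1 := fun m => by omega
      simp only [hidx]
      rw [hE, ENNReal.toReal_ofReal hM0, pow_zero, mul_one]
    | succ k ih =>
      have hstep : (∑' m : ℕ, μ {ω | k + 1 + m ≤ ∑ i, X i ω})
          = μ {ω | k + 1 ≤ ∑ i, X i ω} + ∑' m : ℕ, μ {ω | k + 1 + 1 + m ≤ ∑ i, X i ω} := by
        rw [tsum_eq_zero_add' ENNReal.summable]
        refine congrArg₂ (· + ·) ?_ (tsum_congr fun m => ?_)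
        · rw [show k + 1 + 0 = k + 1 from by omega]
        · rw [show k + 1 + (m + 1) = k + 1 + 1 + m from by omega]
      have hfk1 : (∑' m : ℕ, μ {ω | k + 1 + 1 + m ≤ ∑ i, X i ω}) ≠ ⊤ := hfin (k + 1)
      have hadd : (∑' m : ℕ, μ {ω | k + 1 + m ≤ ∑ i, X i ω}).toReal
          = (μ {ω | k + 1 ≤ ∑ i, X i ω}).toReal
            + (∑' m : ℕ, μ {ω | k + 1 + 1 + m ≤ ∑ i, X i ω}).toReal := by
        rw [hstep, ENNReal.toReal_add (measure_ne_top μ _) hfk1]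
      have hkr : (∑' m : ℕ, μ {ω | k + 1 + m ≤ ∑ i, X i ω}).toReal
          ≤ M * (μ {ω | k + 1 ≤ ∑ i, X i ω}).toReal := by
        have h := hkey k
        have hne : ENNReal.ofReal M * μ {ω | k + 1 ≤ ∑ i, X i ω} ≠ ⊤ :=
          ENNReal.mul_ne_top ENNReal.ofReal_ne_top (measure_ne_top μ _)
        have h2 := (ENNReal.toReal_le_toReal (hfin k) hne).mpr h
        rwa [ENNReal.toReal_mul, ENNReal.toReal_ofReal hM0] at h2
      have hX1nonneg : (0:ℝ) ≤ (∑' m : ℕ, μ {ω | k + 1 + m ≤ ∑ i, X i ω}).toReal :=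
        ENNReal.toReal_nonneg
      have h1M : (0:ℝ) ≤ 1 - 1 / M := by
        rw [sub_nonneg]
        exact (div_le_one hMpos).mpr hM1
      have hP : (∑' m : ℕ, μ {ω | k + 1 + m ≤ ∑ i, X i ω}).toReal / M
          ≤ (μ {ω | k + 1 ≤ ∑ i, X i ω}).toReal :=
        (div_le_iff₀ hMpos).mpr (by linarith [hkr])
      calc (∑' m : ℕ, μ {ω | k + 1 + 1 + m ≤ ∑ i, X i ω}).toReal
          = (∑' m : ℕ, μ {ω | k + 1 + m ≤ ∑ i, X i ω}).toReal
            - (μ {ω | k + 1 ≤ ∑ i, X i ω}).toReal := by linarith [hadd]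
        _ ≤ (∑' m : ℕ, μ {ω | k + 1 + m ≤ ∑ i, X i ω}).toReal
            - (∑' m : ℕ, μ {ω | k + 1 + m ≤ ∑ i, X i ω}).toReal / M := by linarith [hP]
        _ = (∑' m : ℕ, μ {ω | k + 1 + m ≤ ∑ i, X i ω}).toReal * (1 - 1 / M) := by ring
        _ ≤ (M * (1 - 1 / M) ^ k) * (1 - 1 / M) := mul_le_mul_of_nonneg_right ih h1M
        _ = M * (1 - 1 / M) ^ (k + 1) := by rw [pow_succ]; ring
  -- numeric estimate
  have hfinal : (∑' m : ℕ, μ {ω | τ + 1 + m ≤ ∑ i, X i ω}).toReal < ε := by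
    have hεpos := hε.1
    have hMε : (0:ℝ) < M / ε := div_pos hMpos hεpos
    have hlog : Real.log (M / ε) + 1 ≤ (τ:ℝ) / M := by
      rw [le_div_iff₀ hMpos]
      calc (Real.log (M / ε) + 1) * M = M * (Real.log (M / ε) + 1) := mul_comm _ _
        _ ≤ (τ:ℝ) := hτ
    have hexp1 : (1 - 1 / M) ≤ Real.exp (-(1 / M)) := by
      have := Real.add_one_le_exp (-(1 / M)); linarith
    have h1M : (0:ℝ) ≤ 1 - 1 / M := by
      rw [sub_nonneg]; exact (div_le_one hMpos).mpr hM1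
    have hpow : (1 - 1 / M) ^ τ ≤ Real.exp (-((τ:ℝ) / M)) := by
      calc (1 - 1 / M) ^ τ ≤ Real.exp (-(1 / M)) ^ τ := pow_le_pow_left₀ h1M hexp1 τ
        _ = Real.exp ((τ:ℝ) * (-(1 / M))) := (Real.exp_nat_mul _ τ).symm
        _ = Real.exp (-((τ:ℝ) / M)) := by ring_nf
    have hexp2 : Real.exp (-((τ:ℝ) / M)) ≤ ε / M * Real.exp (-1) := by
      have h1 : -((τ:ℝ) / M) ≤ -Real.log (M / ε) + (-1) := by linarith [hlog]
      calc Real.exp (-((τ:ℝ) / M)) ≤ Real.exp (-Real.log (M / ε) + (-1)) :=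
            Real.exp_le_exp.mpr h1
        _ = Real.exp (-Real.log (M / ε)) * Real.exp (-1) := Real.exp_add _ _
        _ = (M / ε)⁻¹ * Real.exp (-1) := by rw [Real.exp_neg, Real.exp_log hMε]
        _ = ε / M * Real.exp (-1) := by rw [inv_div]
    calc (∑' m : ℕ, μ {ω | τ + 1 + m ≤ ∑ i, X i ω}).toReal
        ≤ M * (1 - 1 / M) ^ τ := hbound τ
      _ ≤ M * (ε / M * Real.exp (-1)) := by
          refine mul_le_mul_of_nonneg_left (le_trans hpow hexp2) hM0
      _ = ε * Real.exp (-1) := by field_simp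
      _ < ε := by
          have hlt : Real.exp (-1) < 1 := Real.exp_lt_one_iff.mpr (by norm_num)
          calc ε * Real.exp (-1) < ε * 1 := by
                exact mul_lt_mul_of_pos_left hlt hεpos
            _ = ε := mul_one ε
  -- splitting the expectation
  have hsplit : ENNReal.ofReal M
      = (∑ m ∈ Finset.range τ, μ {ω | m + 1 ≤ ∑ i, X i ω})
        + ∑' m : ℕ, μ {ω | τ + 1 + m ≤ ∑ i, X i ω} := by
    rw [← hE, ← Summable.sum_add_tsum_nat_add' (f := fun m : ℕ => μ {ω | m + 1 ≤ ∑ i, X i ω})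
      (k := τ) ENNReal.summable]
    congr 1
    refine tsum_congr fun m => ?_
    have hi : (m + τ) + 1 = τ + 1 + m := by omega
    rw [hi]
  have hreal : M = (∑ m ∈ Finset.range τ, (μ {ω | m + 1 ≤ ∑ i, X i ω}).toReal)
      + (∑' m : ℕ, μ {ω | τ + 1 + m ≤ ∑ i, X i ω}).toReal := by
    have h := congrArg ENNReal.toReal hsplit
    rwa [ENNReal.toReal_ofReal hM0,
      ENNReal.toReal_add (ENNReal.sum_ne_top.mpr fun a _ => measure_ne_top μ _) (hfin τ),
      ENNReal.toReal_sum fun a _ => measure_ne_top μ _] at h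
  have hIcc : (∑ j ∈ Finset.Icc 1 τ, (μ {ω | j ≤ ∑ i, X i ω}).toReal)
      = ∑ m ∈ Finset.range τ, (μ {ω | m + 1 ≤ ∑ i, X i ω}).toReal := by
    rw [← Finset.Ico_add_one_right_eq_Icc, Finset.sum_Ico_eq_sum_range]
    simp only [Nat.add_sub_cancel, Nat.succ_sub_one]
    refine Finset.sum_congr rfl fun m _ => ?_
    have hi : 1 + m = m + 1 := by omega
    rw [hi]
  have htsum_toReal : (∑' j : ℕ, (μ {ω | τ + 1 + j ≤ ∑ i, X i ω}).toReal)
      = (∑' m : ℕ, μ {ω | τ + 1 + m ≤ ∑ i, X i ω}).toReal :=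
    (ENNReal.tsum_toReal_eq fun a => measure_ne_top μ _).symm
  constructor
  · rw [htsum_toReal, hIcc]
    linarith [hreal]
  · rw [htsum_toReal]
    exact hfinal
end

section
/- Let μ ≥ 1 be a real number, let ε ∈ (0, 1], and let τ be a natural number with τ ≥ μ (ln(μ/ε) + 1). Then Σ_{i=τ+1}^{∞} e^{1 − i/μ} = e^{1 − τ/μ} / (e^{1/μ} − 1), and this quantity is strictly less than ε. -/
/-!
The tail is a geometric series with ratio `e^{-1/μ}`, summing to `e^{1-τ/μ} / (e^{1/μ} - 1)`.
Since `e^x - 1 > x`, this is less than `μ e^{1-τ/μ}`, and the choice of `τ` makes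
`e^{1-τ/μ} ≤ e^{-log (μ/ε)} = ε/μ`.
-/

open Real

lemma tsum_exp_sub_add_div (a b : ℝ) {μ : ℝ} (hμ : 0 < μ) :
    ∑' j : ℕ, exp (a - (b + 1 + j) / μ) = exp (a - b / μ) / (exp (1 / μ) - 1) := by
  have hr : exp (-(1 / μ)) < 1 := exp_lt_one_iff.mpr (by simp [hμ])
  have hd : exp (1 / μ) - 1 ≠ 0 := (sub_pos.mpr (one_lt_exp_iff.mpr (by positivity))).ne'
  have hd' : 1 - exp (-(1 / μ)) ≠ 0 := (sub_pos.mpr hr).ne'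
  have hterm : ∀ j : ℕ, exp (a - (b + 1 + j) / μ) = exp (a - (b + 1) / μ) * exp (-(1 / μ)) ^ j := by
    intro j
    rw [← exp_nat_mul, ← exp_add]
    ring_nf
  have hshift : exp (a - b / μ) = exp (a - (b + 1) / μ) * exp (1 / μ) := by
    rw [← exp_add]
    ring_nf
  have hinv : exp (-(1 / μ)) * exp (1 / μ) = 1 := by rw [← exp_add]; simp
  simp_rw [hterm]
  rw [tsum_mul_left, tsum_geometric_of_lt_one (exp_pos _).le hr, hshift]
  field_simp
  linear_combination hinv

lemma div_exp_one_div_sub_one_lt {μ y : ℝ} (hμ : 0 < μ) (hy : 0 < y) :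
    y / (exp (1 / μ) - 1) < μ * y :=
  calc y / (exp (1 / μ) - 1) < y / (1 / μ) := by
        gcongr
        linarith [add_one_lt_exp (one_div_pos.mpr hμ).ne']
    _ = μ * y := by field_simp

lemma mul_exp_one_sub_div_le {μ ε t : ℝ} (hμ : 0 < μ) (hε : 0 < ε)
    (ht : μ * (log (μ / ε) + 1) ≤ t) : μ * exp (1 - t / μ) ≤ ε :=
  calc μ * exp (1 - t / μ) ≤ μ * exp (-log (μ / ε)) := by
        gcongr
        have : log (μ / ε) + 1 ≤ t / μ := by rw [le_div_iff₀ hμ]; linarith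
        linarith
    _ = ε := by rw [exp_neg, exp_log (by positivity)]; field_simp

/-- For a real `μ ≥ 1`, `ε ∈ (0, 1]` and a natural number `τ ≥ μ (ln (μ / ε) + 1)`,
the geometric tail sum `∑_{i=τ+1}^{∞} e^{1 - i/μ}` equals
`e^{1 - τ/μ} / (e^{1/μ} - 1)`, and this quantity is strictly less than `ε`. -/
theorem stmt_3 (μ ε : ℝ) (hμ : 1 ≤ μ) (hε : ε ∈ Set.Ioc (0 : ℝ) 1)
    (τ : ℕ) (hτ : μ * (Real.log (μ / ε) + 1) ≤ (τ : ℝ)) :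
    (∑' j : ℕ, Real.exp (1 - ((τ : ℝ) + 1 + (j : ℝ)) / μ))
      = Real.exp (1 - (τ : ℝ) / μ) / (Real.exp (1 / μ) - 1) ∧
    Real.exp (1 - (τ : ℝ) / μ) / (Real.exp (1 / μ) - 1) < ε := by
  have hμ0 : 0 < μ := one_pos.trans_le hμ
  refine ⟨tsum_exp_sub_add_div 1 τ hμ0, ?_⟩
  calc exp (1 - τ / μ) / (exp (1 / μ) - 1) < μ * exp (1 - τ / μ) :=
        div_exp_one_div_sub_one_lt hμ0 (exp_pos _)
    _ ≤ ε := mul_exp_one_sub_div_le hμ0 hε.1 hτ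
end

section
/- Let X be a random variable taking values in {1, 2, 3, …}, and let Y = Z₁ + ⋯ + Z_r be a sum of independent geometric random variables with parameters q₁, …, q_r ∈ (0, 1]; set w* = Σⱼ 1/qⱼ. Suppose P[X ≥ i] ≤ P[Y ≥ i] for every positive integer i. Let ε ∈ (0, 1] and let τ be a natural number with τ ≥ w* (ln(w*/ε) + 1). Then Σ_{i=1}^{τ} P[X ≥ i] ≤ E[X] < Σ_{i=1}^{τ} P[X ≥ i] + ε; in particular the truncated sum approximates E[X] within additive error ε. -/
open MeasureTheory ProbabilityTheory Finset ENNReal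

lemma count_Icc (a N y : ℕ) :
    ((Finset.Icc (a+1) N).filter (fun i => i ≤ y)).card = min N y - a := by
  have h : (Finset.Icc (a+1) N).filter (fun i => i ≤ y) = Finset.Icc (a+1) (min N y) := by
    ext i; simp only [Finset.mem_Icc, Finset.mem_filter]; omega
  rw [h, Nat.card_Icc]; omega

lemma nat_key {r : ℕ} (τ N : ℕ) (z b : Fin r → ℕ) (hb : ∑ j, b j ≤ τ) :
    min N (∑ j, z j) - τ ≤ ∑ j, min N (z j - b j) := by
  by_cases h : ∃ j, N ≤ z j - b j
  · obtain ⟨j0, hj0⟩ := h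
    have e : min N (z j0 - b j0) = N := min_eq_left hj0
    have h1 : N ≤ ∑ j, min N (z j - b j) := by
      calc N = min N (z j0 - b j0) := e.symm
      _ ≤ ∑ j, min N (z j - b j) := Finset.single_le_sum (f := fun j => min N (z j - b j))
        (fun j _ => Nat.zero_le _) (Finset.mem_univ j0)
    omega
  · push_neg at h
    have h2 : ∀ j, min N (z j - b j) = z j - b j := fun j => min_eq_right (h j).le
    have h3 : ∑ j, z j ≤ ∑ j, ((z j - b j) + b j) :=
      Finset.sum_le_sum (fun j _ => by omega)
    rw [Finset.sum_add_distrib] at h3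
    simp only [h2]
    omega

lemma tail_geom {Ω' : Type*} [MeasurableSpace Ω'] (ν : Measure Ω') [IsProbabilityMeasure ν]
    (W : Ω' → ℕ) (hW : Measurable W) (hWpos : ∀ ω, 1 ≤ W ω) (p : ℝ)
    (hgeom : ∀ i, 1 ≤ i → (ν {ω | W ω = i}).toReal = (1-p)^(i-1) * p) :
    ∀ m, 1 ≤ m → (ν {ω | m ≤ W ω}).toReal = (1-p)^(m-1) := by
  intro m hm
  induction m, hm using Nat.le_induction with
  | base =>
    have : {ω | 1 ≤ W ω} = Set.univ := Set.eq_univ_of_forall (fun ω => hWpos ω)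
    simp [this]
  | succ m hm ih =>
    have hsplit : {ω | m ≤ W ω} = {ω | W ω = m} ∪ {ω | m + 1 ≤ W ω} := by
      ext ω; simp only [Set.mem_setOf_eq, Set.mem_union]; omega
    have hdisj : Disjoint {ω | W ω = m} {ω | m + 1 ≤ W ω} := by
      rw [Set.disjoint_left]; intro ω h1 h2; simp only [Set.mem_setOf_eq] at h1 h2; omega
    have hms : MeasurableSet {ω | m + 1 ≤ W ω} := by
      have : {ω | m + 1 ≤ W ω} = W ⁻¹' (Set.Ici (m+1)) := rfl
      rw [this]; exact hW measurableSet_Ici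
    have hmeq : ν {ω | m ≤ W ω} = ν {ω | W ω = m} + ν {ω | m + 1 ≤ W ω} := by
      rw [hsplit, measure_union hdisj hms]
    have h1 := ih
    rw [hmeq, ENNReal.toReal_add (measure_ne_top _ _) (measure_ne_top _ _)] at h1
    have h2 := hgeom m hm
    have : (ν {ω | m + 1 ≤ W ω}).toReal = (1-p)^(m-1) - (1-p)^(m-1) * p := by
      rw [← h2]; linarith [h1]
    rw [this, Nat.add_sub_cancel]
    conv_rhs => rw [show m = (m-1)+1 by omega, pow_succ]
    ring

lemma lint_nat {Ω : Type*} [MeasurableSpace Ω] (μ : Measure Ω) (X : Ω → ℕ) (hX : Measurable X) :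
    ∫⁻ ω, (X ω : ℝ≥0∞) ∂μ = ∑' n : ℕ, μ {ω | n + 1 ≤ X ω} := by
  have hpt : ∀ ω, (X ω : ℝ≥0∞) = ∑' n : ℕ, Set.indicator {ω' | n + 1 ≤ X ω'} (fun _ => (1:ℝ≥0∞)) ω := by
    intro ω
    rw [tsum_eq_sum (s := Finset.range (X ω)) (fun n hn => by
      simp only [Set.indicator_apply, Set.mem_setOf_eq]
      rw [if_neg]; simp only [Finset.mem_range] at hn; omega)]
    simp only [Set.indicator_apply, Set.mem_setOf_eq]
    rw [Finset.sum_congr rfl (fun n hn => by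
      rw [if_pos]; simp only [Finset.mem_range] at hn; omega)]
    simp
  calc ∫⁻ ω, (X ω : ℝ≥0∞) ∂μ
      = ∫⁻ ω, ∑' n : ℕ, Set.indicator {ω' | n + 1 ≤ X ω'} (fun _ => (1:ℝ≥0∞)) ω ∂μ := by
        congr 1; ext ω; exact hpt ω
    _ = ∑' n : ℕ, ∫⁻ ω, Set.indicator {ω' | n + 1 ≤ X ω'} (fun _ => (1:ℝ≥0∞)) ω ∂μ := by
        refine lintegral_tsum (fun n => ?_)
        refine (Measurable.indicator measurable_const ?_).aemeasurable
        exact hX measurableSet_Ici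
    _ = ∑' n : ℕ, μ {ω | n + 1 ≤ X ω} := by
        refine tsum_congr (fun n => ?_)
        exact lintegral_indicator_one (hX measurableSet_Ici)

/-- Let `X` be a random variable with values in `{1, 2, 3, …}` whose tail is dominated by
the tail of a sum `Y = Z₁ + ⋯ + Z_r` of independent geometric random variables with
parameters `q₁, …, q_r ∈ (0, 1]`, and let `w* = ∑ⱼ 1 / qⱼ`. Then for every `ε ∈ (0, 1]`
and every natural `τ ≥ w* (ln (w*/ε) + 1)`, the truncated tail sum `∑_{i=1}^{τ} P[X ≥ i]`
approximates `E[X]` within additive error `ε`: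
`∑_{i=1}^{τ} P[X ≥ i] ≤ E[X] < ∑_{i=1}^{τ} P[X ≥ i] + ε`. -/
theorem stmt_4 {Ω Ω' : Type*} [MeasurableSpace Ω] [MeasurableSpace Ω']
    (μ : Measure Ω) [IsProbabilityMeasure μ] (ν : Measure Ω') [IsProbabilityMeasure ν]
    (X : Ω → ℕ) (hXmeas : Measurable X) (hXpos : ∀ ω, 1 ≤ X ω)
    (r : ℕ) (q : Fin r → ℝ) (hq : ∀ j, q j ∈ Set.Ioc (0 : ℝ) 1)
    (Z : Fin r → Ω' → ℕ)
    (hZmeas : ∀ j, Measurable (Z j))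
    (hZpos : ∀ j, ∀ ω, 1 ≤ Z j ω)
    (hZindep : iIndepFun Z ν)
    (hZgeom : ∀ j, ∀ i : ℕ, 1 ≤ i →
      (ν {ω | Z j ω = i}).toReal = (1 - q j) ^ (i - 1) * q j)
    (hdom : ∀ i : ℕ, 1 ≤ i →
      (μ {ω | i ≤ X ω}).toReal ≤ (ν {ω | i ≤ ∑ j, Z j ω}).toReal)
    (ε : ℝ) (hε : ε ∈ Set.Ioc (0 : ℝ) 1)
    (τ : ℕ) (hτ : (∑ j, 1 / q j) * (Real.log ((∑ j, 1 / q j) / ε) + 1) ≤ (τ : ℝ)) :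
    (∑ i ∈ Finset.Icc 1 τ, (μ {ω | i ≤ X ω}).toReal) ≤ ∫ ω, (X ω : ℝ) ∂μ ∧
    ∫ ω, (X ω : ℝ) ∂μ < (∑ i ∈ Finset.Icc 1 τ, (μ {ω | i ≤ X ω}).toReal) + ε := by
  obtain ⟨hε0, hε1⟩ := hε
  have hqpos : ∀ j, 0 < q j := fun j => (hq j).1
  have hqle : ∀ j, q j ≤ 1 := fun j => (hq j).2
  set w : ℝ := ∑ j, 1 / q j with hw_def
  set Y : Ω' → ℕ := fun ω => ∑ j, Z j ω with hY_def
  have hYmeas : Measurable Y := Finset.measurable_sum _ (fun j _ => hZmeas j)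
  have hrpos : 0 < r := by
    rcases Nat.eq_zero_or_pos r with h0 | h
    · exfalso
      subst h0
      have h1 := hdom 1 le_rfl
      have e1 : {ω | 1 ≤ X ω} = Set.univ := Set.eq_univ_of_forall hXpos
      have e2 : {ω : Ω' | (1:ℕ) ≤ ∑ j : Fin 0, Z j ω} = ∅ := by
        ext ω; simp
      rw [e1, e2] at h1
      simp at h1
      linarith
    · exact h
  have hne : Nonempty (Fin r) := ⟨⟨0, hrpos⟩⟩
  have hinv_nonneg : ∀ j : Fin r, (0:ℝ) ≤ 1 / q j := fun j => by
    have := hqpos j; positivity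
  have hw1 : (1:ℝ) ≤ w := by
    obtain ⟨j0⟩ := hne
    have h1 : (1:ℝ) ≤ 1 / q j0 := by
      rw [le_div_iff₀ (hqpos j0)]; linarith [hqle j0]
    calc (1:ℝ) ≤ 1 / q j0 := h1
    _ ≤ w := Finset.single_le_sum (fun j _ => hinv_nonneg j) (Finset.mem_univ j0)
  have hwpos : (0:ℝ) < w := by linarith
  set b : Fin r → ℕ := fun j => ⌊(1 / q j) * (τ:ℝ) / w⌋₊ with hb_def
  have hb_sum : ∑ j, b j ≤ τ := by
    have h1 : (∑ j, (b j : ℝ)) ≤ ∑ j, (1 / q j) * (τ:ℝ) / w := by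
      refine Finset.sum_le_sum (fun j _ => Nat.floor_le ?_)
      have := hqpos j
      positivity
    have h2 : ∑ j, (1 / q j) * (τ:ℝ) / w = (τ:ℝ) := by
      rw [← Finset.sum_div, ← Finset.sum_mul, ← hw_def]
      field_simp
    rw [h2] at h1
    exact_mod_cast h1
  have hZtail : ∀ j, ∀ m, 1 ≤ m → (ν {ω | m ≤ Z j ω}).toReal = (1 - q j)^(m-1) :=
    fun j => tail_geom ν (Z j) (hZmeas j) (hZpos j) (q j) (hZgeom j)
  -- key combinatorial bound, per N, in ℝ≥0∞
  have hkey : ∀ N : ℕ, ∑ i ∈ Finset.Icc (τ+1) N, ν {ω | i ≤ Y ω}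
      ≤ ∑ j, ∑ k ∈ Finset.Icc 1 N, ν {ω | b j + k ≤ Z j ω} := by
    intro N
    have hmsY : ∀ i : ℕ, MeasurableSet {ω | i ≤ Y ω} := fun i => hYmeas measurableSet_Ici
    have hmsZ : ∀ (j : Fin r) (k : ℕ), MeasurableSet {ω | b j + k ≤ Z j ω} :=
      fun j k => (hZmeas j) measurableSet_Ici
    calc ∑ i ∈ Finset.Icc (τ+1) N, ν {ω | i ≤ Y ω}
        = ∑ i ∈ Finset.Icc (τ+1) N, ∫⁻ ω, Set.indicator {ω' | i ≤ Y ω'} (fun _ => (1:ℝ≥0∞)) ω ∂ν := by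
          exact Finset.sum_congr rfl (fun i _ => (lintegral_indicator_one (hmsY i)).symm)
      _ = ∫⁻ ω, ∑ i ∈ Finset.Icc (τ+1) N, Set.indicator {ω' | i ≤ Y ω'} (fun _ => (1:ℝ≥0∞)) ω ∂ν := by
          rw [lintegral_finset_sum _ (fun i _ => Measurable.indicator measurable_const (hmsY i))]
      _ ≤ ∫⁻ ω, ∑ j, ∑ k ∈ Finset.Icc 1 N, Set.indicator {ω' | b j + k ≤ Z j ω'} (fun _ => (1:ℝ≥0∞)) ω ∂ν := by
          refine lintegral_mono (fun ω => ?_)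
          simp only [Set.indicator_apply, Set.mem_setOf_eq]
          rw [Finset.sum_boole]
          rw [Finset.sum_congr rfl (fun (j : Fin r) _ =>
            Finset.sum_boole (s := Finset.Icc 1 N) (p := fun k => b j + k ≤ Z j ω))]
          rw [← Nat.cast_sum]
          refine Nat.cast_le.mpr ?_
          rw [count_Icc]
          have e2 : ∀ j : Fin r, ((Finset.Icc 1 N).filter (fun k => b j + k ≤ Z j ω)).card
              = min N (Z j ω - b j) := by
            intro j
            have hf : (Finset.Icc 1 N).filter (fun k => b j + k ≤ Z j ω)
                = (Finset.Icc (0+1) N).filter (fun k => k ≤ Z j ω - b j) := by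
              ext k; simp only [Finset.mem_filter, Finset.mem_Icc]; omega
            rw [hf, count_Icc]; omega
          rw [Finset.sum_congr rfl (fun j _ => e2 j)]
          exact nat_key τ N (fun j => Z j ω) b hb_sum
      _ = ∑ j, ∑ k ∈ Finset.Icc 1 N, ν {ω | b j + k ≤ Z j ω} := by
          rw [lintegral_finset_sum _ (fun j _ => Finset.measurable_sum _
            (fun k _ => Measurable.indicator measurable_const (hmsZ j k)))]
          refine Finset.sum_congr rfl (fun j _ => ?_)
          rw [lintegral_finset_sum _ (fun k _ => Measurable.indicator measurable_const (hmsZ j k))]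
          exact Finset.sum_congr rfl (fun k _ => lintegral_indicator_one (hmsZ j k))
  -- the real bound B0
  set B0 : ℝ := ∑ j, (1 - q j)^(b j) / q j with hB0_def
  have hB0_nonneg : 0 ≤ B0 := Finset.sum_nonneg (fun j _ =>
    div_nonneg (pow_nonneg (by linarith [hqle j]) _) (hqpos j).le)
  have hRHSreal : ∀ N : ℕ, ∀ j : Fin r,
      ∑ k ∈ Finset.Icc 1 N, (ν {ω | b j + k ≤ Z j ω}).toReal ≤ (1 - q j)^(b j) / q j := by
    intro N j
    have hq0 : (0:ℝ) ≤ 1 - q j := by linarith [hqle j]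
    have hq1 : 1 - q j < 1 := by linarith [hqpos j]
    have e1 : ∀ k ∈ Finset.Icc 1 N,
        (ν {ω | b j + k ≤ Z j ω}).toReal = (1 - q j)^(b j) * (1 - q j)^(k-1) := by
      intro k hk
      have hk' := (Finset.mem_Icc.mp hk).1
      rw [hZtail j (b j + k) (by omega), ← pow_add]
      congr 1
      omega
    rw [Finset.sum_congr rfl e1, ← Finset.mul_sum]
    have e3 : ∑ k ∈ Finset.Icc 1 N, (1 - q j)^(k-1) = ∑ m ∈ Finset.range N, (1 - q j)^m := by
      rw [← Finset.Ico_add_one_right_eq_Icc, Finset.sum_Ico_eq_sum_range]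
      simp only [Nat.add_sub_cancel]
      exact Finset.sum_congr rfl (fun m _ => by congr 1; omega)
    rw [e3]
    have e4 : ∑ m ∈ Finset.range N, (1 - q j)^m ≤ (q j)⁻¹ := by
      refine le_trans (Summable.sum_le_tsum (Finset.range N) (fun m _ => by positivity)
        (summable_geometric_of_lt_one hq0 hq1)) ?_
      rw [tsum_geometric_of_lt_one hq0 hq1]
      rw [show (1:ℝ) - (1 - q j) = q j by ring]
    calc (1 - q j)^(b j) * ∑ m ∈ Finset.range N, (1 - q j)^m
        ≤ (1 - q j)^(b j) * (q j)⁻¹ :=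
          mul_le_mul_of_nonneg_left e4 (pow_nonneg hq0 _)
      _ = (1 - q j)^(b j) / q j := by rw [div_eq_mul_inv]
  have hBoundN : ∀ N : ℕ, ∑ i ∈ Finset.Icc (τ+1) N, ν {ω | i ≤ Y ω} ≤ ENNReal.ofReal B0 := by
    intro N
    refine le_trans (hkey N) ?_
    have e1 : ∀ j : Fin r, ∑ k ∈ Finset.Icc 1 N, ν {ω | b j + k ≤ Z j ω}
        = ENNReal.ofReal (∑ k ∈ Finset.Icc 1 N, (ν {ω | b j + k ≤ Z j ω}).toReal) := by
      intro j
      rw [ENNReal.ofReal_sum_of_nonneg (fun k _ => ENNReal.toReal_nonneg)]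
      exact Finset.sum_congr rfl (fun k _ => (ENNReal.ofReal_toReal (measure_ne_top _ _)).symm)
    rw [Finset.sum_congr rfl (fun j _ => e1 j),
      ← ENNReal.ofReal_sum_of_nonneg (fun j _ => Finset.sum_nonneg (fun k _ => ENNReal.toReal_nonneg))]
    exact ENNReal.ofReal_le_ofReal (Finset.sum_le_sum (fun j _ => hRHSreal N j))
  -- B0 < ε
  have hτw : Real.log (w/ε) + 1 ≤ (τ:ℝ)/w := by
    rw [le_div_iff₀ hwpos]
    linarith [hτ, mul_comm (Real.log (w/ε) + 1) w]
  have hexp : Real.exp (1 - (τ:ℝ)/w) * w ≤ ε := by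
    have h1 : Real.exp (1 - (τ:ℝ)/w) ≤ Real.exp (-Real.log (w/ε)) :=
      Real.exp_le_exp.mpr (by linarith)
    have h2 : Real.exp (-Real.log (w/ε)) = ε / w := by
      rw [Real.exp_neg, Real.exp_log (by positivity), inv_div]
    rw [h2] at h1
    calc Real.exp (1 - (τ:ℝ)/w) * w ≤ (ε/w) * w := mul_le_mul_of_nonneg_right h1 hwpos.le
    _ = ε := by field_simp
  have hB0lt : B0 < ε := by
    have hstep : ∀ j ∈ Finset.univ, (1 - q j)^(b j) / q j < Real.exp (1 - (τ:ℝ)/w) * (1 / q j) := by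
      intro j _
      have hq0 : (0:ℝ) ≤ 1 - q j := by linarith [hqle j]
      have h1 : (1 - q j)^(b j) ≤ Real.exp (-(q j) * (b j)) := by
        calc (1 - q j)^(b j) ≤ (Real.exp (-(q j)))^(b j) :=
          pow_le_pow_left₀ hq0 (by linarith [Real.add_one_le_exp (-(q j))]) _
        _ = Real.exp (-(q j) * (b j)) := by
          rw [← Real.exp_nat_mul]; congr 1; ring
      have hflo : (1 / q j) * (τ:ℝ) / w - 1 < (b j : ℝ) := Nat.sub_one_lt_floor _
      have h3 : q j * ((1 / q j) * (τ:ℝ) / w) = (τ:ℝ)/w := by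
        have hq0' : q j ≠ 0 := (hqpos j).ne'
        have hw0' : w ≠ 0 := hwpos.ne'
        field_simp
      have h2 : -(q j) * (b j) < q j - (τ:ℝ)/w := by
        nlinarith [hqpos j, hflo, h3]
      have h4 : Real.exp (-(q j) * (b j)) < Real.exp (q j - (τ:ℝ)/w) := Real.exp_lt_exp.mpr h2
      have h5 : Real.exp (q j - (τ:ℝ)/w) ≤ Real.exp (1 - (τ:ℝ)/w) :=
        Real.exp_le_exp.mpr (by linarith [hqle j])
      have h6 : (1 - q j)^(b j) < Real.exp (1 - (τ:ℝ)/w) := lt_of_le_of_lt h1 (lt_of_lt_of_le h4 h5)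
      rw [div_eq_mul_one_div]
      refine mul_lt_mul_of_pos_right h6 ?_
      have := hqpos j
      positivity
    calc B0 < ∑ j, Real.exp (1 - (τ:ℝ)/w) * (1/q j) :=
        Finset.sum_lt_sum_of_nonempty Finset.univ_nonempty hstep
    _ = Real.exp (1 - (τ:ℝ)/w) * w := by rw [← Finset.mul_sum]
    _ ≤ ε := hexp
  -- assemble
  have hdomE : ∀ i : ℕ, 1 ≤ i → μ {ω | i ≤ X ω} ≤ ν {ω | i ≤ Y ω} := fun i hi =>
    (ENNReal.toReal_le_toReal (measure_ne_top _ _) (measure_ne_top _ _)).mp (hdom i hi)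
  have htailX : ∀ N : ℕ, ∑ i ∈ Finset.Icc (τ+1) N, μ {ω | i ≤ X ω} ≤ ENNReal.ofReal B0 := by
    intro N
    refine le_trans (Finset.sum_le_sum (fun i hi => hdomE i ?_)) (hBoundN N)
    have := (Finset.mem_Icc.mp hi).1; omega
  set T : ℝ≥0∞ := ∑' n : ℕ, μ {ω | n + 1 ≤ X ω} with hT_def
  set S : ℝ≥0∞ := ∑ i ∈ Finset.Icc 1 τ, μ {ω | i ≤ X ω} with hS_def
  have hSne : S ≠ ⊤ := by
    rw [hS_def]
    exact (ENNReal.sum_lt_top.mpr (fun i _ => measure_lt_top _ _)).ne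
  have hreindex : ∀ M : ℕ, ∑ i ∈ Finset.Icc 1 M, μ {ω | i ≤ X ω}
      = ∑ n ∈ Finset.range M, μ {ω | n + 1 ≤ X ω} := by
    intro M
    rw [← Finset.Ico_add_one_right_eq_Icc, Finset.sum_Ico_eq_sum_range]
    simp only [Nat.add_sub_cancel]
    exact Finset.sum_congr rfl (fun n _ => by rw [Nat.add_comm 1 n])
  have hpartial : ∀ N : ℕ, ∑ n ∈ Finset.range N, μ {ω | n + 1 ≤ X ω} ≤ S + ENNReal.ofReal B0 := by
    intro N
    rw [← hreindex N]
    have hsub : Finset.Icc 1 N ⊆ Finset.Icc 1 τ ∪ Finset.Icc (τ+1) N := by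
      intro i hi
      simp only [Finset.mem_union, Finset.mem_Icc] at *
      omega
    have hdisj : Disjoint (Finset.Icc 1 τ) (Finset.Icc (τ+1) N) := by
      rw [Finset.disjoint_left]
      intro i hi hi'
      simp only [Finset.mem_Icc] at hi hi'
      omega
    calc ∑ i ∈ Finset.Icc 1 N, μ {ω | i ≤ X ω}
        ≤ ∑ i ∈ Finset.Icc 1 τ ∪ Finset.Icc (τ+1) N, μ {ω | i ≤ X ω} :=
          Finset.sum_le_sum_of_subset hsub
      _ = S + ∑ i ∈ Finset.Icc (τ+1) N, μ {ω | i ≤ X ω} := by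
          rw [Finset.sum_union hdisj, hS_def]
      _ ≤ S + ENNReal.ofReal B0 := add_le_add le_rfl (htailX N)
  have hTle : T ≤ S + ENNReal.ofReal B0 := by
    rw [hT_def, ENNReal.tsum_eq_iSup_sum' _ Finset.exists_nat_subset_range]
    exact iSup_le hpartial
  have hSB_ne : S + ENNReal.ofReal B0 ≠ ⊤ :=
    (ENNReal.add_lt_top.mpr ⟨hSne.lt_top, ENNReal.ofReal_lt_top⟩).ne
  have hTne : T ≠ ⊤ := ((lt_of_le_of_lt hTle hSB_ne.lt_top)).ne
  have hlint : ∫⁻ ω, (X ω : ℝ≥0∞) ∂μ = T := lint_nat μ X hXmeas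
  have hint : ∫ ω, (X ω : ℝ) ∂μ = T.toReal := by
    have hm2 : AEMeasurable (fun ω => (X ω : ℝ≥0∞)) μ :=
      ((measurable_from_nat (f := (Nat.cast : ℕ → ℝ≥0∞))).comp hXmeas).aemeasurable
    have h := integral_toReal hm2 (Filter.Eventually.of_forall (fun ω => ENNReal.natCast_lt_top (X ω)))
    simp only [ENNReal.toReal_natCast] at h
    rw [← hlint]
    exact h
  have hSreal : (∑ i ∈ Finset.Icc 1 τ, (μ {ω | i ≤ X ω}).toReal) = S.toReal := by
    rw [hS_def, ENNReal.toReal_sum (fun i _ => measure_ne_top _ _)]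
  have hlow : S ≤ T := by
    rw [hS_def, hreindex τ, hT_def]
    exact ENNReal.sum_le_tsum _
  constructor
  · rw [hSreal, hint]
    exact ENNReal.toReal_mono hTne hlow
  · rw [hSreal, hint]
    have h1 : T.toReal ≤ (S + ENNReal.ofReal B0).toReal := ENNReal.toReal_mono hSB_ne hTle
    rw [ENNReal.toReal_add hSne ENNReal.ofReal_ne_top, ENNReal.toReal_ofReal hB0_nonneg] at h1
    linarith [hB0lt]
end

section
/- Let T₁ and T₂ be independent random variables taking values in {2, 3, 4, …} with P[Tᵢ > k] = (k + 1) · 2^{−k} for every integer k ≥ 0 (i = 1, 2). Then E[min(T₁, T₂)] = 80/27. In particular, 80/27 < 10/3. -/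
open MeasureTheory ProbabilityTheory

/-- Expectation of a `ℕ`-valued function as the sum of its tail measures. -/
lemma aux_lintegral_nat_eq_tsum {Ω : Type*} [MeasurableSpace Ω] (μ : Measure Ω)
    (g : Ω → ℕ) (hg : Measurable g) :
    ∫⁻ ω, (g ω : ENNReal) ∂μ = ∑' n : ℕ, μ {ω | n < g ω} := by
  have hset : ∀ n : ℕ, MeasurableSet {ω | n < g ω} := fun n =>
    hg (measurableSet_Ioi : MeasurableSet (Set.Ioi n))
  have key : ∀ ω, (g ω : ENNReal) =
      ∑' n : ℕ, Set.indicator {ω | n < g ω} (fun _ => (1 : ENNReal)) ω := by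
    intro ω
    have h1 : (fun n : ℕ => Set.indicator {ω | n < g ω} (fun _ => (1 : ENNReal)) ω)
        = fun n => if n < g ω then 1 else 0 := by
      funext n
      by_cases h : n < g ω <;> simp [Set.indicator, h]
    rw [h1, tsum_eq_sum (s := Finset.range (g ω))
      (fun n hn => by rw [if_neg]; simpa using Finset.mem_range.not.mp hn)]
    rw [Finset.sum_ite_of_true (fun n hn => Finset.mem_range.mp hn)]
    simp
  calc ∫⁻ ω, (g ω : ENNReal) ∂μ
      = ∫⁻ ω, ∑' n : ℕ, Set.indicator {ω | n < g ω} (fun _ => (1 : ENNReal)) ω ∂μ := by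
        exact lintegral_congr key
    _ = ∑' n : ℕ, ∫⁻ ω, Set.indicator {ω | n < g ω} (fun _ => (1 : ENNReal)) ω ∂μ :=
        lintegral_tsum fun n =>
          ((measurable_const.indicator (hset n)).aemeasurable)
    _ = ∑' n : ℕ, μ {ω | n < g ω} := by
        refine tsum_congr fun n => ?_
        simp [lintegral_indicator (hset n)]

lemma aux_hasSum : HasSum (fun n : ℕ => (((n : ℝ) + 1) ^ 2) * (1 / 4) ^ n) (80 / 27) := by
  have hr : ‖(1 / 4 : ℝ)‖ < 1 := by rw [Real.norm_eq_abs, abs_of_nonneg (by norm_num : (0:ℝ) ≤ 1/4)]; norm_num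
  have h2 := hasSum_choose_mul_geometric_of_norm_lt_one (𝕜 := ℝ) 2 hr
  have h1 := hasSum_choose_mul_geometric_of_norm_lt_one (𝕜 := ℝ) 1 hr
  have h := (h2.mul_left 2).sub h1
  have hfun : (fun n : ℕ => 2 * (((n + 2).choose 2 : ℝ) * (1 / 4) ^ n)
      - ((n + 1).choose 1 : ℝ) * (1 / 4) ^ n)
      = fun n : ℕ => (((n : ℝ) + 1) ^ 2) * (1 / 4) ^ n := by
    funext n
    rw [Nat.cast_choose_two, Nat.choose_one_right]
    push_cast
    ring
  rw [hfun] at h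
  rw [show (2 * (1 / (1 - 1 / 4 : ℝ) ^ (2 + 1)) - 1 / (1 - 1 / 4) ^ (1 + 1)) = 80 / 27 by norm_num] at h
  exact h

/-- Let `T₁` and `T₂` be independent random variables with values in `{2, 3, 4, …}`
such that `P[Tᵢ > k] = (k + 1) · 2^{-k}` for every `k ≥ 0`. Then
`E[min (T₁, T₂)] = 80 / 27`, and in particular `80 / 27 < 10 / 3`. -/
theorem stmt_6 {Ω : Type*} [MeasurableSpace Ω] (μ : Measure Ω) [IsProbabilityMeasure μ]
    (T₁ T₂ : Ω → ℕ)
    (hmeas₁ : Measurable T₁) (hmeas₂ : Measurable T₂)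
    (hval₁ : ∀ ω, 2 ≤ T₁ ω) (hval₂ : ∀ ω, 2 ≤ T₂ ω)
    (hindep : IndepFun T₁ T₂ μ)
    (htail₁ : ∀ k : ℕ, (μ {ω | k < T₁ ω}).toReal = ((k : ℝ) + 1) / 2 ^ k)
    (htail₂ : ∀ k : ℕ, (μ {ω | k < T₂ ω}).toReal = ((k : ℝ) + 1) / 2 ^ k) :
    (∫ ω, (min (T₁ ω) (T₂ ω) : ℝ) ∂μ = 80 / 27) ∧ (80 / 27 : ℝ) < 10 / 3 := by
  refine ⟨?_, by norm_num⟩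
  set g : Ω → ℕ := fun ω => min (T₁ ω) (T₂ ω) with hg_def
  have hg : Measurable g := hmeas₁.min hmeas₂
  -- tail of the min is the product of the tails
  have htail : ∀ n : ℕ, μ {ω | n < g ω} = μ {ω | n < T₁ ω} * μ {ω | n < T₂ ω} := by
    intro n
    have hset : {ω | n < g ω} = T₁ ⁻¹' Set.Ioi n ∩ T₂ ⁻¹' Set.Ioi n := by
      ext ω; simp [hg_def, lt_min_iff, Set.mem_Ioi]
    rw [hset, hindep.measure_inter_preimage_eq_mul _ _ measurableSet_Ioi measurableSet_Ioi]
    rfl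
  -- the real tail values
  have hterm : ∀ n : ℕ, μ {ω | n < g ω} = ENNReal.ofReal ((((n : ℝ) + 1) ^ 2) * (1 / 4) ^ n) := by
    intro n
    rw [htail n, ← ENNReal.ofReal_toReal (measure_ne_top μ {ω | n < T₁ ω}),
      ← ENNReal.ofReal_toReal (measure_ne_top μ {ω | n < T₂ ω}), htail₁ n, htail₂ n,
      ← ENNReal.ofReal_mul (by positivity)]
    congr 1
    have h4 : (2:ℝ)^n * 2^n = 4^n := by rw [← mul_pow]; norm_num
    rw [div_mul_div_comm, h4, div_pow, one_pow, mul_one_div, sq]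
  -- sum in ENNReal
  have hsum : ∑' n : ℕ, μ {ω | n < g ω} = ENNReal.ofReal (80 / 27) := by
    simp_rw [hterm]
    rw [← ENNReal.ofReal_tsum_of_nonneg (fun n => by positivity) aux_hasSum.summable,
      aux_hasSum.tsum_eq]
  have hlint : ∫⁻ ω, (g ω : ENNReal) ∂μ = ENNReal.ofReal (80 / 27) := by
    rw [aux_lintegral_nat_eq_tsum μ g hg, hsum]
  have hmeasR : Measurable fun ω => (g ω : ℝ) := measurable_from_top.comp hg
  simp_rw [← Nat.cast_min]
  rw [integral_eq_lintegral_of_nonneg_ae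
    (Filter.Eventually.of_forall fun ω => by positivity) hmeasR.aestronglyMeasurable]
  simp_rw [ENNReal.ofReal_natCast]
  rw [hlint, ENNReal.toReal_ofReal (by norm_num)]
end
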